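/- arXiv:math/0601558 — 8 statements merged into one kernel-verified Lean document; each statement's English description precedes it below -/
import Mathlib

section
/- Let 0 < q < 1 be real and define the Jackson integral J[f](x) := (1−q)·∑_{n≥0} f(xqⁿ)·xqⁿ for f : ℝ → ℝ. Let f, g : ℝ → ℝ and x ∈ ℝ, and assume: for every y of the form y = xqᵐ with m ≥ 0, the families (n ↦ f(yqⁿ)·yqⁿ) and (n ↦ g(yqⁿ)·yqⁿ), indexed by n ≥ 0, are summable; and the double family ((m,n) ↦ f(xq^m)·xq^m·g(xqⁿ)·xqⁿ), indexed by pairs m, n ≥ 0, is summable. Then J[f](x)·J[g](x) + (1−q)·J[f·g·id](x) = J[J[f]·g + f·J[g]](x), where id denotes the identity function y ↦ y and products of functions are pointwise. -/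
/-!
Write `a n = f(xqⁿ)·xqⁿ` and `b n = g(xqⁿ)·xqⁿ`. Since `x qᵐ qⁿ = x q^(m+n)`, the Jackson integral
at `x qᵐ` is `(1 - q)` times the tail `∑_{n ≥ m} a n`, so after dividing by `(1 - q)²` the identity
reads `∑_m (∑_{n ≥ m} a n) b m + ∑_m a m ∑_{n ≥ m} b n = (∑ a)(∑ b) + ∑ a n b n`.
The left side sums the double series `∑ a i b j` over `{i ≥ j}` and over `{i ≤ j}`; these regions
cover `ℕ × ℕ` and overlap exactly on the diagonal.
-/

/-- The Jackson integral `J[f](x) = (1−q)·∑_{n≥0} f(xqⁿ)·xqⁿ`. -/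
noncomputable def jacksonIntegral (q : ℝ) (f : ℝ → ℝ) (x : ℝ) : ℝ :=
  (1 - q) * ∑' n : ℕ, f (x * q ^ n) * (x * q ^ n)

open Function

theorem injective_add_fst : Injective fun p : ℕ × ℕ => (p.1 + p.2, p.1) :=
  fun p p' h => by simp only [Prod.ext_iff] at h ⊢; omega

theorem injective_fst_add_add (k : ℕ) : Injective fun p : ℕ × ℕ => (p.1, p.1 + p.2 + k) :=
  fun p p' h => by simp only [Prod.ext_iff] at h ⊢; omega

section DoubleSeries

variable {α : Type*} [AddCommGroup α] [UniformSpace α] [IsUniformAddGroup α] [CompleteSpace α]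
  [T2Space α] {F : ℕ × ℕ → α}

theorem isCompl_range_lower_upper :
    IsCompl (Set.range fun p : ℕ × ℕ => (p.1 + p.2, p.1))
      (Set.range fun p : ℕ × ℕ => (p.1, p.1 + p.2 + 1)) := by
  constructor
  · rw [Set.disjoint_left]
    rintro _ ⟨⟨i, j⟩, rfl⟩ ⟨⟨k, l⟩, h⟩
    simp only [Prod.mk.injEq] at h
    omega
  · rw [codisjoint_iff_le_sup]
    rintro ⟨i, j⟩ -
    rcases le_or_gt j i with h | h
    · exact Or.inl ⟨(j, i - j), Prod.ext (by dsimp only; omega) rfl⟩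
    · exact Or.inr ⟨(i, j - i - 1), Prod.ext rfl (by dsimp only; omega)⟩

theorem Summable.tsum_eq_tsum_lower_add_tsum_upper (hF : Summable F) :
    ∑' p, F p = ∑' p : ℕ × ℕ, F (p.1 + p.2, p.1) + ∑' p : ℕ × ℕ, F (p.1, p.1 + p.2 + 1) := by
  refine (HasSum.add_isCompl isCompl_range_lower_upper ?_ ?_).tsum_eq
  · exact injective_add_fst.hasSum_range_iff.mpr (hF.comp_injective injective_add_fst).hasSum
  · exact (injective_fst_add_add 1).hasSum_range_iff.mpr
      (hF.comp_injective (injective_fst_add_add 1)).hasSum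

theorem Summable.tsum_upper_eq_tsum_diag_add (hF : Summable F) :
    ∑' p : ℕ × ℕ, F (p.1, p.1 + p.2) = ∑' n, F (n, n) + ∑' p : ℕ × ℕ, F (p.1, p.1 + p.2 + 1) := by
  have hupper : Summable fun p : ℕ × ℕ => F (p.1, p.1 + p.2) :=
    hF.comp_injective (injective_fst_add_add 0)
  have hupper' : Summable fun p : ℕ × ℕ => F (p.1, p.1 + p.2 + 1) :=
    hF.comp_injective (injective_fst_add_add 1)
  have hdiag : Summable fun n => F (n, n) :=
    hF.comp_injective fun n n' h => (Prod.mk.inj h).1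
  rw [hupper.tsum_prod, hupper'.tsum_prod, ← hdiag.tsum_add hupper'.prod]
  exact tsum_congr fun m => (hupper.prod_factor m).tsum_eq_zero_add

theorem Summable.tsum_lower_add_tsum_upper (hF : Summable F) :
    ∑' p : ℕ × ℕ, F (p.1 + p.2, p.1) + ∑' p : ℕ × ℕ, F (p.1, p.1 + p.2) =
      ∑' p, F p + ∑' n, F (n, n) := by
  rw [hF.tsum_upper_eq_tsum_diag_add, hF.tsum_eq_tsum_lower_add_tsum_upper]
  abel

end DoubleSeries

section TailSums

variable {𝕜 : Type*} [NormedDivisionRing 𝕜] [CompleteSpace 𝕜] {a b : ℕ → 𝕜}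

theorem Summable.tsum_prod_mul (hab : Summable fun p : ℕ × ℕ => a p.1 * b p.2) :
    ∑' p : ℕ × ℕ, a p.1 * b p.2 = (∑' n, a n) * ∑' n, b n := by
  rw [hab.tsum_prod, ← tsum_mul_right]
  exact tsum_congr fun m => by dsimp only; exact tsum_mul_left

theorem tsum_tail_mul_add_mul_tsum_tail (hab : Summable fun p : ℕ × ℕ => a p.1 * b p.2) :
    ∑' m, ((∑' n, a (m + n)) * b m + a m * ∑' n, b (m + n)) =
      (∑' n, a n) * (∑' n, b n) + ∑' n, a n * b n := by
  have hlower : Summable fun p : ℕ × ℕ => a (p.1 + p.2) * b p.1 :=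
    (hab.comp_injective injective_add_fst :)
  have hupper : Summable fun p : ℕ × ℕ => a p.1 * b (p.1 + p.2) :=
    (hab.comp_injective (injective_fst_add_add 0) :)
  have hlower_eq (m : ℕ) : ∑' n, a (m + n) * b m = (∑' n, a (m + n)) * b m := tsum_mul_right
  have hupper_eq (m : ℕ) : ∑' n, a m * b (m + n) = a m * ∑' n, b (m + n) := tsum_mul_left
  rw [(hlower.prod.congr hlower_eq).tsum_add (hupper.prod.congr hupper_eq),
    ← hab.tsum_prod_mul, ← hab.tsum_lower_add_tsum_upper, hlower.tsum_prod, hupper.tsum_prod]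
  simp only [hlower_eq, hupper_eq]

end TailSums

theorem jacksonIntegral_mul_pow (q : ℝ) (f : ℝ → ℝ) (x : ℝ) (m : ℕ) :
    jacksonIntegral q f (x * q ^ m) =
      (1 - q) * ∑' n, f (x * q ^ (m + n)) * (x * q ^ (m + n)) := by
  simp_rw [jacksonIntegral, mul_assoc x, ← pow_add]

theorem jacksonIntegral_rota_baxter_general
    (q : ℝ) (f g : ℝ → ℝ) (x : ℝ)
    (hfg : Summable (fun p : ℕ × ℕ =>
      f (x * q ^ p.1) * (x * q ^ p.1) * (g (x * q ^ p.2) * (x * q ^ p.2)))) :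
    jacksonIntegral q f x * jacksonIntegral q g x +
      (1 - q) * jacksonIntegral q (fun y => f y * g y * y) x =
      jacksonIntegral q
        (fun y => jacksonIntegral q f y * g y + f y * jacksonIntegral q g y) x := by
  set a : ℕ → ℝ := fun n => f (x * q ^ n) * (x * q ^ n)
  set b : ℕ → ℝ := fun n => g (x * q ^ n) * (x * q ^ n)
  have hdiag : ∑' n, f (x * q ^ n) * g (x * q ^ n) * (x * q ^ n) * (x * q ^ n) =
      ∑' n, a n * b n :=
    tsum_congr fun n => by ring
  have htail : ∑' m, (jacksonIntegral q f (x * q ^ m) * g (x * q ^ m) +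
        f (x * q ^ m) * jacksonIntegral q g (x * q ^ m)) * (x * q ^ m) =
      (1 - q) * ∑' m, ((∑' n, a (m + n)) * b m + a m * ∑' n, b (m + n)) := by
    rw [← tsum_mul_left]
    refine tsum_congr fun m => ?_
    rw [jacksonIntegral_mul_pow, jacksonIntegral_mul_pow]
    ring
  rw [jacksonIntegral, jacksonIntegral, jacksonIntegral, jacksonIntegral, hdiag, htail,
    tsum_tail_mul_add_mul_tsum_tail (a := a) (b := b) hfg]
  ring

/-- Jackson's integral satisfies the Rota–Baxter-type relation
`J[f]·J[g] + (1−q)·J[f·g·id] = J[J[f]·g + f·J[g]]`, under the stated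
summability hypotheses. -/
theorem jacksonIntegral_rota_baxter
    (q : ℝ) (hq0 : 0 < q) (hq1 : q < 1) (f g : ℝ → ℝ) (x : ℝ)
    (hf : ∀ m : ℕ, Summable (fun n : ℕ =>
      f ((x * q ^ m) * q ^ n) * ((x * q ^ m) * q ^ n)))
    (hg : ∀ m : ℕ, Summable (fun n : ℕ =>
      g ((x * q ^ m) * q ^ n) * ((x * q ^ m) * q ^ n)))
    (hfg : Summable (fun p : ℕ × ℕ =>
      f (x * q ^ p.1) * (x * q ^ p.1) * (g (x * q ^ p.2) * (x * q ^ p.2)))) :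
    jacksonIntegral q f x * jacksonIntegral q g x +
      (1 - q) * jacksonIntegral q (fun y => f y * g y * y) x =
      jacksonIntegral q
        (fun y => jacksonIntegral q f y * g y + f y * jacksonIntegral q g y) x :=
  jacksonIntegral_rota_baxter_general q f g x hfg
end

section
/- (Spitzer's identity) Let R be a commutative algebra over ℚ and let P : R → R be a ℚ-linear Rota–Baxter operator of weight 1. Fix a ∈ R and define S₀ = 1 and S_{n+1} = P(Sₙ · a) for n ≥ 0 (so Sₙ = P(P(⋯P(a)a⋯)a) is the n-fold iteration). Let L ∈ R[[t]] be the formal power series L = ∑_{i≥1} ((−1)^{i−1}/i) · P(aⁱ) · tⁱ, which has zero constant term. Then the formal exponential of L, namely the substitution of L into the exponential series ∑_{n≥0} Xⁿ/n!, equals the power series ∑_{n≥0} Sₙ tⁿ in R[[t]]. -/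
/-!
Both sides solve the linear differential equation `F' = L' F` with `F(0) = 1`, whose solution
is unique over a `ℚ`-algebra. For `exp(L)` this is the chain rule, `exp(L)` being the
substitution of `L` into `exp`. For `∑ Sₙ tⁿ`, since `L' = ∑ (-1)ᵏ P(aᵏ⁺¹) tᵏ`, the equation is
Baxter's recursion `(n+1) Sₙ₊₁ = ∑_{i+j=n} (-1)ⁱ P(aⁱ⁺¹) Sⱼ`. It follows by induction on `n` from
the Rota–Baxter relation for `P(aⁱ⁺¹) P(Sⱼ a)`: two of its three terms telescope along the
antidiagonal, and the third sums to `P((n+1) Sₙ₊₁ a)`.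
-/

/-- The formal exponential `exp(L) = ∑_{n≥0} Lⁿ/n!` of a power series `L` with zero
constant term, over a commutative `ℚ`-algebra `R`.  Since `L` has zero constant
term, `coeff m (Lⁿ) = 0` for `n > m`, so the coefficient of `tᵐ` in `exp(L)` is
the finite sum `∑_{n=0}^{m} (1/n!)·coeff m (Lⁿ)`, which is how we define it. -/
noncomputable def PowerSeries.expOf {R : Type*} [CommRing R] [Algebra ℚ R]
    (L : PowerSeries R) : PowerSeries R :=
  PowerSeries.mk fun m =>
    ∑ n ∈ Finset.range (m + 1),
      ((n.factorial : ℚ)⁻¹) • (PowerSeries.coeff m (L ^ n))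

open Finset PowerSeries

theorem Finset.Nat.sum_antidiagonal_shift_sub {M : Type*} [AddCommGroup M] (h : ℕ × ℕ → M)
    (m : ℕ) :
    ∑ p ∈ antidiagonal m, (h (p.1, p.2 + 1) - h (p.1 + 1, p.2)) = h (0, m + 1) - h (m + 1, 0) := by
  rw [sum_sub_distrib, eq_sub_of_add_eq' (Nat.sum_antidiagonal_succ' (f := h)).symm,
    eq_sub_of_add_eq' (Nat.sum_antidiagonal_succ (f := h)).symm, sub_sub_sub_cancel_left]

section RotaBaxter

variable {R : Type*} [CommRing R] (P : R →+ R) (a : R) (S : ℕ → R)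

theorem rotaBaxter_apply_pow_mul_iterate_succ
    (hP : ∀ x y : R, P x * P y = P (x * P y) + P (P x * y) + P (x * y))
    (hS : ∀ n : ℕ, S (n + 1) = P (S n * a)) (k n : ℕ) :
    P (a ^ (k + 1)) * S (n + 1) =
      P (a ^ (k + 1) * S (n + 1)) + P (P (a ^ (k + 1)) * S n * a) + P (a ^ (k + 2) * S n) := by
  rw [hS, hP, ← hS]
  ring_nf

theorem sum_antidiagonal_rotaBaxter_iterate
    (hP : ∀ x y : R, P x * P y = P (x * P y) + P (P x * y) + P (x * y))
    (hS0 : S 0 = 1) (hS : ∀ n : ℕ, S (n + 1) = P (S n * a)) (m : ℕ) :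
    ∑ p ∈ antidiagonal m, (-1 : ℤ) ^ p.1 • P (a ^ (p.1 + 1)) * S p.2 = (m + 1) • S (m + 1) := by
  induction m with
  | zero => simp [hS, hS0, mul_comm]
  | succ m ih =>
    set h : ℕ × ℕ → R := fun p => (-1 : ℤ) ^ p.1 • P (a ^ (p.1 + 1) * S p.2)
    have hterm : ∀ p : ℕ × ℕ, (-1 : ℤ) ^ p.1 • P (a ^ (p.1 + 1)) * S (p.2 + 1) =
        (h (p.1, p.2 + 1) - h (p.1 + 1, p.2)) +
          P ((-1 : ℤ) ^ p.1 • P (a ^ (p.1 + 1)) * S p.2 * a) := by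
      intro p
      simp only [h, smul_mul_assoc, rotaBaxter_apply_pow_mul_iterate_succ P a S hP hS, map_zsmul,
        pow_succ (-1 : ℤ), mul_neg_one, neg_smul, smul_add]
      abel
    rw [Nat.sum_antidiagonal_succ', sum_congr rfl fun p _ => hterm p, sum_add_distrib,
      Nat.sum_antidiagonal_shift_sub, ← map_sum, ← sum_mul, ih]
    simp only [h, hS0, mul_one, zero_add, pow_zero, one_smul, pow_one, smul_mul_assoc, map_nsmul]
    rw [mul_comm, ← hS, succ_nsmul _ (m + 1)]
    abel

theorem derivative_mk_rotaBaxter_iterate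
    (hP : ∀ x y : R, P x * P y = P (x * P y) + P (P x * y) + P (x * y))
    (hS0 : S 0 = 1) (hS : ∀ n : ℕ, S (n + 1) = P (S n * a)) :
    d⁄dX R (mk S) = mk (fun k => (-1 : ℤ) ^ k • P (a ^ (k + 1))) * mk S := by
  ext m
  simp only [coeff_derivative, coeff_mul, coeff_mk]
  rw [sum_antidiagonal_rotaBaxter_iterate P a S hP hS0 hS, nsmul_eq_mul, Nat.cast_succ, mul_comm]

end RotaBaxter

namespace PowerSeries

variable {R : Type*} [CommRing R]

theorem coeff_pow_eq_zero_of_lt {L : R⟦X⟧} (hL : constantCoeff L = 0) {m n : ℕ} (h : m < n) :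
    coeff m (L ^ n) = 0 :=
  X_pow_dvd_iff.mp (pow_dvd_pow_of_dvd (X_dvd_iff.mpr hL) n) m h

theorem eq_of_derivative_eq_mul [IsAddTorsionFree R] {f g h : R⟦X⟧}
    (hf : d⁄dX R f = h * f) (hg : d⁄dX R g = h * g) (hc : constantCoeff f = constantCoeff g) :
    f = g := by
  ext n
  induction n using Nat.strong_induction_on with
  | _ n ih =>
    cases n with
    | zero => simpa using hc
    | succ m =>
      have hm : coeff (m + 1) f * (m + 1) = coeff (m + 1) g * (m + 1) := by
        rw [← coeff_derivative, ← coeff_derivative, hf, hg, coeff_mul, coeff_mul]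
        refine sum_congr rfl fun p hp => ?_
        rw [ih p.2 (Nat.antidiagonal.snd_lt hp)]
      rw [← Nat.cast_succ, mul_comm, ← nsmul_eq_mul, mul_comm, ← nsmul_eq_mul] at hm
      exact (smul_right_inj m.succ_ne_zero).mp hm

variable [Algebra ℚ R]

theorem constantCoeff_expOf (L : R⟦X⟧) : constantCoeff (expOf L) = 1 := by
  rw [← coeff_zero_eq_constantCoeff_apply]
  simp [expOf]

theorem expOf_eq_subst_exp {L : R⟦X⟧} (hL : constantCoeff L = 0) :
    expOf L = (exp R).subst L := by
  ext m
  rw [coeff_subst' (HasSubst.of_constantCoeff_zero' hL), expOf, coeff_mk,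
    finsum_eq_sum_of_support_subset (s := range (m + 1))]
  · refine sum_congr rfl fun n _ => ?_
    rw [coeff_exp, Algebra.smul_def, smul_eq_mul, one_div]
  · intro n hn
    by_contra h
    simp only [coe_range, Set.mem_Iio, not_lt] at h
    exact hn (by dsimp only; rw [coeff_pow_eq_zero_of_lt hL (by omega), smul_zero])

theorem derivative_expOf {L : R⟦X⟧} (hL : constantCoeff L = 0) :
    d⁄dX R (expOf L) = d⁄dX R L * expOf L := by
  rw [expOf_eq_subst_exp hL, derivative_subst (HasSubst.of_constantCoeff_zero' hL),
    derivative_exp, mul_comm]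

end PowerSeries

/-- **Spitzer's identity.**  Let `P` be a `ℚ`-linear Rota–Baxter operator of
weight 1 on a commutative `ℚ`-algebra `R`, let `a ∈ R`, and let `Sₙ` be the
`n`-fold iteration `S₀ = 1`, `S_{n+1} = P(Sₙ·a)`.  Then with
`L = ∑_{i≥1} ((−1)^{i−1}/i)·P(aⁱ)·tⁱ` one has `exp(L) = ∑_{n≥0} Sₙ tⁿ` in `R[[t]]`. -/
theorem spitzer_identity {R : Type*} [CommRing R] [Algebra ℚ R]
    (P : R →ₗ[ℚ] R)
    (hP : ∀ x y : R, P x * P y = P (x * P y) + P (P x * y) + P (x * y))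
    (a : R) (S : ℕ → R) (hS0 : S 0 = 1) (hS : ∀ n : ℕ, S (n + 1) = P (S n * a))
    (L : PowerSeries R)
    (hL : ∀ i : ℕ, PowerSeries.coeff i L =
      if i = 0 then 0 else (((-1 : ℚ) ^ (i - 1) / (i : ℚ)) • P (a ^ i))) :
    PowerSeries.expOf L = PowerSeries.mk S := by
  have hL0 : constantCoeff L = 0 := by
    rw [← coeff_zero_eq_constantCoeff_apply, hL, if_pos rfl]
  have hdL : d⁄dX R L = mk fun k => (-1 : ℤ) ^ k • P.toAddMonoidHom (a ^ (k + 1)) := by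
    ext k
    have hk : algebraMap ℚ R ((-1) ^ k / (k + 1 : ℕ)) * (k + 1 : ℕ) = (-1) ^ k := by
      rw [← map_natCast (algebraMap ℚ R), ← map_mul, div_mul_cancel₀ _ (by positivity),
        map_pow, map_neg, map_one]
    rw [coeff_derivative, hL, if_neg k.succ_ne_zero, coeff_mk, Nat.add_sub_cancel,
      Algebra.smul_def, zsmul_eq_mul]
    push_cast at hk ⊢
    rw [LinearMap.toAddMonoidHom_coe]
    linear_combination P (a ^ (k + 1)) * hk
  have : IsAddTorsionFree R := .of_module_rat R
  refine eq_of_derivative_eq_mul (derivative_expOf hL0) ?_ (by simp [constantCoeff_expOf, hS0])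
  rw [hdL]
  exact derivative_mk_rotaBaxter_iterate P.toAddMonoidHom a S hP hS0 hS
end

section
/- (Bohnenblust–Spitzer formula) Let R be a commutative ring and let P : R → R be an additive Rota–Baxter operator of weight 1, i.e. P(x)P(y) = P(xP(y)) + P(P(x)y) + P(xy) for all x, y ∈ R. Let n ≥ 1 and s₁, …, sₙ ∈ R. Then ∑_{σ ∈ Sₙ} P(s_{σ(1)}·P(s_{σ(2)}·(⋯·P(s_{σ(n)})⋯))) = ∑_𝒯 (−1)^{n−|𝒯|} · (∏_{T ∈ 𝒯} (|T|−1)!) · ∏_{T ∈ 𝒯} P(∏_{j ∈ T} s_j), where the outer sum on the right runs over all unordered set partitions 𝒯 of {1, …, n} into nonempty blocks, |𝒯| is the number of blocks of 𝒯, and |T| is the size of the block T. -/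
/-- The nested expression `P(s₁·P(s₂·(⋯·P(sₙ)⋯)))`: for the empty list it is `1`,
and for `s :: l` it is `P` of `s` times the nested expression of `l` (so for a
single element it is `P(s₁·1) = P(s₁)`). -/
def nestedRB {R : Type*} [CommRing R] (P : R → R) : List R → R
  | [] => 1
  | s :: l => P (s * nestedRB P l)

/-!
Replace `s` by a family `y : κ → R` and `{1, …, n}` by a finite set `U`: the left-hand side becomes
`symmNested P y U`, the sum of the nested expressions over all orderings of `U`, and the right-hand
side becomes `cycleSum P y U`. Both are `1` for `U = ∅`, and for `k ∉ U` both functions `F` satisfy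
`P (y k) * F y U = F y (insert k U) + ∑ t ∈ U, F (update y t (y k * y t)) U`,
so they agree by induction on `U`. For `symmNested` this recursion comes from expanding every
`P (y k) * P (y t * ⋯)` by the Rota–Baxter identity, with induction on the middle term. For
`cycleSum`, a partition of `insert k U` arises from one of `U` either by adding the block `{k}`,
which gives `P (y k) * cycleSum P y U`, or by adding `k` to a block `T`, which multiplies the
coefficient of `T` by `-#T`; the latter terms cancel the `#T` terms with `t ∈ T` of the last sum.
-/

open Finset Function

namespace RotaBaxter

variable {R κ : Type*} [CommRing R]

def IsWeightOne (P : R →+ R) : Prop :=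
  ∀ x y, P x * P y = P (x * P y) + P (P x * y) + P (x * y)

theorem sum_sum_erase_comm [DecidableEq κ] {M : Type*} [AddCommMonoid M] (U : Finset κ)
    (f : κ → κ → M) :
    ∑ t ∈ U, ∑ u ∈ U.erase t, f t u = ∑ u ∈ U, ∑ t ∈ U.erase u, f t u :=
  sum_comm' fun t u => by simp only [mem_erase]; tauto

section symmNested

variable [DecidableEq κ]

def symmNested (P : R → R) (y : κ → R) (U : Finset κ) : R :=
  if U = ∅ then 1 else ∑ t ∈ U.attach, P (y t * symmNested P y (U.erase t))
termination_by #U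
decreasing_by exact card_erase_lt_of_mem t.2

variable (P : R → R) (y : κ → R)

@[simp] theorem symmNested_empty : symmNested P y ∅ = 1 := by
  rw [symmNested, if_pos rfl]

theorem symmNested_of_nonempty {U : Finset κ} (hU : U.Nonempty) :
    symmNested P y U = ∑ t ∈ U, P (y t * symmNested P y (U.erase t)) := by
  rw [symmNested, if_neg hU.ne_empty, sum_attach U fun t => P (y t * symmNested P y (U.erase t))]

theorem symmNested_singleton (k : κ) : symmNested P y {k} = P (y k) := by
  simp [symmNested_of_nonempty P y (singleton_nonempty k)]

theorem symmNested_congr {y' : κ → R} {U : Finset κ} (h : ∀ t ∈ U, y t = y' t) :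
    symmNested P y U = symmNested P y' U := by
  induction U using Finset.strongInduction with
  | H U ih =>
    rcases U.eq_empty_or_nonempty with rfl | hU
    · simp
    rw [symmNested_of_nonempty P y hU, symmNested_of_nonempty P y' hU]
    refine sum_congr rfl fun t ht => ?_
    rw [h t ht, ih _ (erase_ssubset ht) fun u hu => h u (mem_of_mem_erase hu)]

theorem symmNested_insert {k : κ} {U : Finset κ} (hk : k ∉ U) :
    symmNested P y (insert k U) =
      P (y k * symmNested P y U) + ∑ t ∈ U, P (y t * symmNested P y (insert k (U.erase t))) := by
  rw [symmNested_of_nonempty P y (insert_nonempty k U), sum_insert hk, erase_insert hk]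
  congr 1
  refine sum_congr rfl fun t ht => ?_
  rw [erase_insert_of_ne (ne_of_mem_of_not_mem ht hk).symm]

variable {P : R →+ R}

theorem mul_symmNested (hP : IsWeightOne P) (y : κ → R) {k : κ} {U : Finset κ} (hk : k ∉ U) :
    P (y k) * symmNested P y U =
      symmNested P y (insert k U) + ∑ t ∈ U, symmNested P (update y t (y k * y t)) U := by
  induction U using Finset.strongInduction with
  | H U ih =>
  rcases U.eq_empty_or_nonempty with rfl | hU
  · simp [symmNested_singleton]
  have hinner : ∀ t ∈ U, P (P (y k) * (y t * symmNested P y (U.erase t))) =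
      P (y t * symmNested P y (insert k (U.erase t))) +
        ∑ u ∈ U.erase t, P (y t * symmNested P (update y u (y k * y u)) (U.erase t)) := by
    intro t ht
    rw [mul_left_comm, ih _ (erase_ssubset ht) fun h => hk (mem_of_mem_erase h), mul_add,
      map_add, mul_sum, map_sum]
  have hupdate : ∀ u ∈ U, symmNested P (update y u (y k * y u)) U =
      P (y k * (y u * symmNested P y (U.erase u))) +
        ∑ t ∈ U.erase u, P (y t * symmNested P (update y u (y k * y u)) (U.erase t)) := by
    intro u hu
    rw [symmNested_of_nonempty _ _ hU, ← add_sum_erase U _ hu, update_self, mul_assoc,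
      symmNested_congr P _ fun t ht => update_of_ne (ne_of_mem_erase ht) _ _]
    congr 1
    exact sum_congr rfl fun t ht => by rw [update_of_ne (ne_of_mem_erase ht)]
  calc P (y k) * symmNested P y U
      = ∑ t ∈ U, (P (y k * P (y t * symmNested P y (U.erase t))) +
          P (P (y k) * (y t * symmNested P y (U.erase t))) +
          P (y k * (y t * symmNested P y (U.erase t)))) := by
        rw [symmNested_of_nonempty _ _ hU, mul_sum]
        exact sum_congr rfl fun t _ => hP _ _
    _ = _ := by
        rw [sum_add_distrib, sum_add_distrib, sum_congr rfl hinner, sum_congr rfl hupdate,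
          sum_add_distrib, sum_add_distrib, ← map_sum, ← mul_sum, ← symmNested_of_nonempty _ _ hU,
          symmNested_insert _ _ hk, sum_sum_erase_comm]
        abel

theorem sum_perm_nestedRB_eq_symmNested (y : κ → R) {n : ℕ} (e : Fin n ↪ κ) :
    ∑ σ : Equiv.Perm (Fin n), nestedRB P (List.ofFn fun i => y (e (σ i))) =
      symmNested P y (univ.map e) := by
  induction n with
  | zero => simp [nestedRB]
  | succ n ih =>
    rw [← Equiv.sum_comp Equiv.Perm.decomposeFin.symm, Fintype.sum_prod_type,
      symmNested_of_nonempty _ _ (univ_nonempty.map), sum_map]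
    refine sum_congr rfl fun p _ => ?_
    let e' : Fin n ↪ κ := (Fin.succEmb n).trans ((Equiv.swap 0 p).toEmbedding.trans e)
    have hmap : univ.map e' = (univ.map e).erase (e p) := by
      rw [← map_map, ← map_map, map_eq_image (Fin.succEmb n), Fin.coe_succEmb,
        Fin.image_succ_univ, compl_singleton, map_erase, map_univ_equiv, Equiv.toEmbedding_apply,
        Equiv.swap_apply_left, map_erase]
    calc _ = ∑ τ : Equiv.Perm (Fin n),
          P (y (e p) * nestedRB P (List.ofFn fun i => y (e' (τ i)))) := by
          refine sum_congr rfl fun τ _ => ?_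
          simp [nestedRB, e']
      _ = _ := by rw [← map_sum, ← mul_sum, ih, hmap]

end symmNested

section partitions

variable [DecidableEq κ]

def partitions (U : Finset κ) : Finset (Finset (Finset κ)) :=
  U.powerset.powerset.filter fun 𝒯 => (∀ T ∈ 𝒯, T.Nonempty) ∧
    (∀ T ∈ 𝒯, ∀ T' ∈ 𝒯, T ≠ T' → Disjoint T T') ∧ 𝒯.sup id = U

theorem mem_partitions {U : Finset κ} {𝒯 : Finset (Finset κ)} :
    𝒯 ∈ partitions U ↔ (∀ T ∈ 𝒯, T.Nonempty) ∧
      (∀ T ∈ 𝒯, ∀ T' ∈ 𝒯, T ≠ T' → Disjoint T T') ∧ 𝒯.sup id = U := by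
  rw [partitions, mem_filter, and_iff_right_iff_imp]
  rintro ⟨-, -, hsup⟩
  exact mem_powerset.2 fun T hT => mem_powerset.2 (hsup ▸ le_sup (f := id) hT)

variable {U V T T' : Finset κ} {𝒯 𝒬 𝒬' : Finset (Finset κ)}

theorem subset_of_mem_partitions (h : 𝒯 ∈ partitions U) (hT : T ∈ 𝒯) : T ⊆ U :=
  (mem_partitions.1 h).2.2 ▸ le_sup (f := id) hT

theorem nonempty_of_mem_partitions (h : 𝒯 ∈ partitions U) (hT : T ∈ 𝒯) : T.Nonempty :=
  (mem_partitions.1 h).1 T hT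

theorem empty_notMem_of_mem_partitions (h : 𝒯 ∈ partitions U) : ∅ ∉ 𝒯 :=
  fun h0 => not_nonempty_empty (nonempty_of_mem_partitions h h0)

theorem eq_of_mem_of_mem_partitions (h : 𝒯 ∈ partitions U) (hT : T ∈ 𝒯) (hT' : T' ∈ 𝒯)
    {x : κ} (hx : x ∈ T) (hx' : x ∈ T') : T = T' := by
  by_contra hne
  exact disjoint_left.1 ((mem_partitions.1 h).2.1 T hT T' hT' hne) hx hx'

theorem exists_mem_of_mem_partitions (h : 𝒯 ∈ partitions U) {x : κ} (hx : x ∈ U) :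
    ∃ T ∈ 𝒯, x ∈ T := by
  rw [← (mem_partitions.1 h).2.2] at hx
  simpa using hx

theorem sum_eq_sum_sum_of_mem_partitions {M : Type*} [AddCommMonoid M] (h : 𝒯 ∈ partitions U)
    (f : κ → M) : ∑ x ∈ U, f x = ∑ T ∈ 𝒯, ∑ x ∈ T, f x := by
  obtain ⟨-, hdisj, hsup⟩ := mem_partitions.1 h
  rw [← hsup, sup_eq_biUnion, sum_biUnion (t := id) hdisj]
  rfl

theorem erase_mem_partitions (h : 𝒯 ∈ partitions U) (hT : T ∈ 𝒯) :
    𝒯.erase T ∈ partitions (U \ T) := by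
  obtain ⟨hne, hdisj, -⟩ := mem_partitions.1 h
  refine mem_partitions.2 ⟨fun T' hT' => hne T' (mem_of_mem_erase hT'),
    fun T₁ h₁ T₂ h₂ => hdisj T₁ (mem_of_mem_erase h₁) T₂ (mem_of_mem_erase h₂), ?_⟩
  ext x
  simp only [mem_sup, id_eq, mem_erase, mem_sdiff]
  constructor
  · rintro ⟨T', ⟨hT'T, hT'⟩, hx⟩
    exact ⟨subset_of_mem_partitions h hT' hx,
      fun hxT => hT'T (eq_of_mem_of_mem_partitions h hT' hT hx hxT)⟩
  · rintro ⟨hx, hxT⟩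
    obtain ⟨T', hT', hxT'⟩ := exists_mem_of_mem_partitions h hx
    exact ⟨T', ⟨fun h => hxT (h ▸ hxT'), hT'⟩, hxT'⟩

theorem insert_mem_partitions (h : 𝒬 ∈ partitions V) (hT : T.Nonempty) (hTV : Disjoint T V) :
    insert T 𝒬 ∈ partitions (T ∪ V) := by
  obtain ⟨hne, hdisj, hsup⟩ := mem_partitions.1 h
  have hT𝒬 : ∀ T' ∈ 𝒬, Disjoint T T' :=
    fun T' hT' => hTV.mono_right (subset_of_mem_partitions h hT')
  refine mem_partitions.2 ⟨?_, ?_, by rw [sup_insert, hsup]; rfl⟩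
  · simpa [hT] using hne
  · simp only [mem_insert]
    rintro T₁ (rfl | h₁) T₂ (rfl | h₂) hne₁₂
    exacts [absurd rfl hne₁₂, hT𝒬 T₂ h₂, (hT𝒬 T₁ h₁).symm, hdisj T₁ h₁ T₂ h₂ hne₁₂]

@[simp] theorem partitions_empty : partitions (∅ : Finset κ) = {∅} := by
  ext 𝒯
  refine ⟨fun h => mem_singleton.2 <| eq_empty_of_forall_notMem fun T hT => ?_, ?_⟩
  · exact (nonempty_of_mem_partitions h hT).ne_empty
      (subset_empty.1 (subset_of_mem_partitions h hT))
  · rintro h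
    rw [mem_singleton.1 h, mem_partitions]
    simp

theorem sum_card_sub_one_of_mem_partitions (h : 𝒯 ∈ partitions U) :
    ∑ T ∈ 𝒯, (#T - 1) = #U - #𝒯 := by
  have hcard : ∑ T ∈ 𝒯, #T = #U := by
    rw [card_eq_sum_ones U, sum_eq_sum_sum_of_mem_partitions h]
    exact sum_congr rfl fun T _ => card_eq_sum_ones T
  have : ∑ T ∈ 𝒯, (#T - 1) + #𝒯 = ∑ T ∈ 𝒯, #T := by
    rw [card_eq_sum_ones 𝒯, ← sum_add_distrib]
    exact sum_congr rfl fun T hT => Nat.sub_add_cancel (nonempty_of_mem_partitions h hT).card_pos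
  omega

theorem subset_of_mem_insert_empty (h : 𝒬 ∈ partitions U) (hT : T ∈ insert ∅ 𝒬) : T ⊆ U := by
  rcases mem_insert.1 hT with rfl | hT
  exacts [empty_subset U, subset_of_mem_partitions h hT]

variable {i : κ} {S : Finset κ}

theorem insert_insert_erase_mem_partitions (hi : i ∉ S) (h : 𝒬 ∈ partitions S)
    (hT : T ∈ insert ∅ 𝒬) : insert (insert i T) (𝒬.erase T) ∈ partitions (insert i S) := by
  rcases mem_insert.1 hT with rfl | hT
  · rw [erase_eq_of_notMem (empty_notMem_of_mem_partitions h), insert_empty_eq, insert_eq]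
    exact insert_mem_partitions h (singleton_nonempty i) (disjoint_singleton_left.2 hi)
  · rw [← union_sdiff_of_subset (subset_of_mem_partitions h hT), ← insert_union]
    exact insert_mem_partitions (erase_mem_partitions h hT) (insert_nonempty i T)
      (disjoint_insert_left.2 ⟨fun hiS => hi (mem_sdiff.1 hiS).1, disjoint_sdiff⟩)

theorem eq_of_insert_insert_erase_eq (hi : i ∉ S) (h : 𝒬 ∈ partitions S) (hT : T ∈ insert ∅ 𝒬)
    (h' : 𝒬' ∈ partitions S) (hT' : T' ∈ insert ∅ 𝒬')
    (heq : insert (insert i T) (𝒬.erase T) = insert (insert i T') (𝒬'.erase T')) :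
    𝒬 = 𝒬' ∧ T = T' := by
  have hiT : i ∉ T := fun hiT => hi (subset_of_mem_insert_empty h hT hiT)
  have hiT' : i ∉ T' := fun hiT' => hi (subset_of_mem_insert_empty h' hT' hiT')
  -- the block containing `i` determines `T`
  obtain rfl : T = T' := by
    rw [← erase_insert hiT,
      eq_of_mem_of_mem_partitions (insert_insert_erase_mem_partitions hi h' hT')
        (heq ▸ mem_insert_self _ _) (mem_insert_self _ _) (mem_insert_self i T)
        (mem_insert_self i T'),
      erase_insert hiT']
  have hnotMem : ∀ {𝒬}, 𝒬 ∈ partitions S → insert i T ∉ 𝒬.erase T := fun h hmem =>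
    hi (subset_of_mem_partitions h (mem_of_mem_erase hmem) (mem_insert_self i T))
  have herase : 𝒬.erase T = 𝒬'.erase T := by
    rw [← erase_insert (hnotMem h), heq, erase_insert (hnotMem h')]
  refine ⟨?_, rfl⟩
  rcases mem_insert.1 hT with rfl | hT
  · rwa [erase_eq_of_notMem (empty_notMem_of_mem_partitions h),
      erase_eq_of_notMem (empty_notMem_of_mem_partitions h')] at herase
  · have hT' : T ∈ 𝒬' :=
      (mem_insert.1 hT').resolve_left (nonempty_of_mem_partitions h hT).ne_empty
    rw [← insert_erase hT, herase, insert_erase hT']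

theorem exists_eq_insert_insert_erase (hi : i ∉ S) (h : 𝒯 ∈ partitions (insert i S)) :
    ∃ 𝒬 ∈ partitions S, ∃ T ∈ insert ∅ 𝒬, insert (insert i T) (𝒬.erase T) = 𝒯 := by
  obtain ⟨B, hB, hiB⟩ := exists_mem_of_mem_partitions h (mem_insert_self i S)
  have hrest := erase_mem_partitions h hB
  have hS : B.erase i ∪ (insert i S \ B) = S := by
    have := subset_of_mem_partitions h hB
    grind
  by_cases hBi : (B.erase i).Nonempty
  · have hnotMem : B.erase i ∉ 𝒯.erase B := fun hmem => by
      obtain ⟨x, hx⟩ := hBi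
      exact ne_of_mem_erase hmem (eq_of_mem_of_mem_partitions h (mem_of_mem_erase hmem) hB hx
        (mem_of_mem_erase hx))
    refine ⟨insert (B.erase i) (𝒯.erase B), ?_, B.erase i, mem_insert_of_mem (mem_insert_self _ _),
      by rw [erase_insert hnotMem, insert_erase hiB, insert_erase hB]⟩
    rw [← hS]
    exact insert_mem_partitions hrest hBi (disjoint_sdiff.mono_left (erase_subset i B))
  · rw [not_nonempty_iff_eq_empty] at hBi
    refine ⟨𝒯.erase B, by rwa [← hS, hBi, empty_union], ∅, mem_insert_self _ _, ?_⟩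
    rw [erase_eq_of_notMem (empty_notMem_of_mem_partitions hrest), ← hBi, insert_erase hiB,
      insert_erase hB]

/-- `T = ∅` stands for adding `i` as the new block `{i}`. -/
theorem sum_partitions_insert {M : Type*} [AddCommMonoid M] (F : Finset (Finset κ) → M)
    (hi : i ∉ S) :
    ∑ 𝒯 ∈ partitions (insert i S), F 𝒯 =
      ∑ 𝒬 ∈ partitions S, ∑ T ∈ insert ∅ 𝒬, F (insert (insert i T) (𝒬.erase T)) := by
  rw [sum_sigma']
  refine (sum_bij (fun x _ => insert (insert i x.2) (x.1.erase x.2)) ?_ ?_ ?_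
    fun _ _ => rfl).symm
  · rintro ⟨𝒬, T⟩ hx
    obtain ⟨h, hT⟩ := mem_sigma.1 hx
    exact insert_insert_erase_mem_partitions hi h hT
  · rintro ⟨𝒬, T⟩ hx ⟨𝒬', T'⟩ hx' heq
    obtain ⟨h, hT⟩ := mem_sigma.1 hx
    obtain ⟨h', hT'⟩ := mem_sigma.1 hx'
    obtain ⟨rfl, rfl⟩ := eq_of_insert_insert_erase_eq hi h hT h' hT' heq
    rfl
  · intro 𝒯 h
    obtain ⟨𝒬, h𝒬, T, hT, rfl⟩ := exists_eq_insert_insert_erase hi h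
    exact ⟨⟨𝒬, T⟩, mem_sigma.2 ⟨h𝒬, hT⟩, rfl⟩

end partitions

open Nat in
def cycleCoeff (m : ℕ) : ℤ := (-1) ^ (m - 1) * (m - 1)!

theorem cycleCoeff_succ {m : ℕ} (hm : m ≠ 0) : cycleCoeff (m + 1) = -(m * cycleCoeff m) := by
  obtain ⟨m, rfl⟩ := Nat.exists_eq_succ_of_ne_zero hm
  simp only [cycleCoeff, Nat.succ_sub_one, Nat.factorial_succ, pow_succ]
  push_cast
  ring

section cycleSum

variable (P : R → R) (y : κ → R)

def cycleWeight (T : Finset κ) : R := cycleCoeff #T • P (∏ j ∈ T, y j)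

theorem cycleWeight_singleton (k : κ) : cycleWeight P y {k} = P (y k) := by
  simp [cycleWeight, cycleCoeff]

variable [DecidableEq κ]

/-- This is `∑_{σ ∈ Perm U} sign σ * ∏_{c a cycle of σ} P (∏_{j ∈ c} y j)`, with the permutations
grouped by the partition of `U` into the supports of their cycles: a block `T` is the support of
`(#T - 1)!` cycles, each of sign `(-1) ^ (#T - 1)`. -/
def cycleSum (U : Finset κ) : R := ∑ 𝒯 ∈ partitions U, ∏ T ∈ 𝒯, cycleWeight P y T

theorem cycleWeight_insert {k : κ} {T : Finset κ} (hk : k ∉ T) (hT : T.Nonempty) :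
    cycleWeight P y (insert k T) = -(#T • cycleCoeff #T • P (y k * ∏ j ∈ T, y j)) := by
  rw [cycleWeight, card_insert_of_notMem hk, prod_insert hk, cycleCoeff_succ hT.card_pos.ne',
    neg_smul, mul_smul, natCast_zsmul]

theorem cycleWeight_update_of_notMem {t : κ} {T : Finset κ} (ht : t ∉ T) (b : R) :
    cycleWeight P (update y t b) T = cycleWeight P y T := by
  rw [cycleWeight, cycleWeight, prod_update_of_notMem ht]

theorem cycleWeight_update_of_mem {t : κ} {T : Finset κ} (ht : t ∈ T) (b : R) :
    cycleWeight P (update y t (b * y t)) T = cycleCoeff #T • P (b * ∏ j ∈ T, y j) := by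
  rw [cycleWeight, prod_update_of_mem ht, sdiff_singleton_eq_erase, mul_assoc,
    mul_prod_erase T y ht]

theorem prod_cycleWeight_update {U T : Finset κ} {𝒬 : Finset (Finset κ)} (h𝒬 : 𝒬 ∈ partitions U)
    (hT : T ∈ 𝒬) {t : κ} (ht : t ∈ T) (b : R) :
    ∏ T' ∈ 𝒬, cycleWeight P (update y t (b * y t)) T' =
      cycleCoeff #T • P (b * ∏ j ∈ T, y j) * ∏ T' ∈ 𝒬.erase T, cycleWeight P y T' := by
  rw [← mul_prod_erase 𝒬 _ hT, cycleWeight_update_of_mem P y ht]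
  congr 1
  refine prod_congr rfl fun T' hT' => cycleWeight_update_of_notMem P y (fun htT' => ?_) _
  exact ne_of_mem_erase hT' (eq_of_mem_of_mem_partitions h𝒬 (mem_of_mem_erase hT') hT htT' ht)

theorem mul_cycleSum {k : κ} {U : Finset κ} (hk : k ∉ U) :
    P (y k) * cycleSum P y U =
      cycleSum P y (insert k U) + ∑ t ∈ U, cycleSum P (update y t (y k * y t)) U := by
  have hsplit : ∀ 𝒬 ∈ partitions U,
      ∑ T ∈ insert ∅ 𝒬, ∏ T' ∈ insert (insert k T) (𝒬.erase T), cycleWeight P y T' +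
        ∑ t ∈ U, ∏ T ∈ 𝒬, cycleWeight P (update y t (y k * y t)) T =
      P (y k) * ∏ T ∈ 𝒬, cycleWeight P y T := by
    intro 𝒬 h𝒬
    have hkT : ∀ T ∈ 𝒬, k ∉ T := fun T hT hkT => hk (subset_of_mem_partitions h𝒬 hT hkT)
    have hempty := empty_notMem_of_mem_partitions h𝒬
    rw [sum_insert hempty, insert_empty_eq, erase_eq_of_notMem hempty,
      prod_insert fun h => hkT _ h (mem_singleton_self k),
      cycleWeight_singleton, sum_eq_sum_sum_of_mem_partitions h𝒬, add_assoc, ← sum_add_distrib,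
      add_eq_left]
    refine sum_eq_zero fun T hT => ?_
    rw [prod_insert fun h => hkT _ (mem_of_mem_erase h) (mem_insert_self k T),
      cycleWeight_insert P y (hkT T hT) (nonempty_of_mem_partitions h𝒬 hT),
      sum_congr rfl fun t ht => prod_cycleWeight_update P y h𝒬 hT ht (y k), sum_const,
      neg_mul, smul_mul_assoc, neg_add_cancel]
  rw [cycleSum, cycleSum, sum_partitions_insert _ hk, mul_sum]
  simp only [cycleSum]
  rw [sum_comm, ← sum_add_distrib]
  exact (sum_congr rfl hsplit).symm

theorem prod_cycleWeight_of_mem_partitions {U : Finset κ} {𝒯 : Finset (Finset κ)}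
    (h : 𝒯 ∈ partitions U) :
    ∏ T ∈ 𝒯, cycleWeight P y T =
      ((-1 : ℤ) ^ (#U - #𝒯) * ∏ T ∈ 𝒯, ((#T - 1).factorial : ℤ)) • ∏ T ∈ 𝒯, P (∏ j ∈ T, y j) := by
  simp only [cycleWeight, cycleCoeff]
  rw [prod_smul, prod_mul_distrib, prod_pow_eq_pow_sum, sum_card_sub_one_of_mem_partitions h]

end cycleSum

theorem symmNested_eq_cycleSum [DecidableEq κ] {P : R →+ R} (hP : IsWeightOne P) (y : κ → R)
    (U : Finset κ) :
    symmNested P y U = cycleSum P y U := by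
  induction U using Finset.induction_on generalizing y with
  | empty => simp [cycleSum]
  | insert k U hk ih =>
    rw [eq_sub_of_add_eq (mul_symmNested hP y hk).symm,
      eq_sub_of_add_eq (mul_cycleSum P y hk).symm]
    simp only [ih]

end RotaBaxter

theorem bohnenblust_spitzer_general {R : Type*} [CommRing R] (P : R → R)
    (hadd : ∀ x y : R, P (x + y) = P x + P y)
    (hP : ∀ x y : R, P x * P y = P (x * P y) + P (P x * y) + P (x * y))
    (n : ℕ) (s : Fin n → R) :
    ∑ σ : Equiv.Perm (Fin n), nestedRB P (List.ofFn fun i => s (σ i)) =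
      ∑ 𝒯 ∈ (Finset.univ : Finset (Finset (Finset (Fin n)))).filter
          (fun 𝒯 => (∀ T ∈ 𝒯, T.Nonempty) ∧
            (∀ T ∈ 𝒯, ∀ T' ∈ 𝒯, T ≠ T' → Disjoint T T') ∧
            𝒯.sup id = Finset.univ),
        ((-1 : ℤ) ^ (n - 𝒯.card) * ∏ T ∈ 𝒯, ((T.card - 1).factorial : ℤ)) •
          ∏ T ∈ 𝒯, P (∏ j ∈ T, s j) := by
  have hpartitions : RotaBaxter.partitions (univ : Finset (Fin n)) = univ.filter
      fun 𝒯 => (∀ T ∈ 𝒯, T.Nonempty) ∧ (∀ T ∈ 𝒯, ∀ T' ∈ 𝒯, T ≠ T' → Disjoint T T') ∧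
        𝒯.sup id = univ := by
    ext 𝒯
    rw [RotaBaxter.mem_partitions, mem_filter, and_iff_right (mem_univ 𝒯)]
  calc _ = RotaBaxter.symmNested (AddMonoidHom.mk' P hadd) s (univ.map (Embedding.refl _)) :=
        RotaBaxter.sum_perm_nestedRB_eq_symmNested s (Embedding.refl _)
    _ = RotaBaxter.cycleSum P s univ := by
        rw [map_refl]
        exact RotaBaxter.symmNested_eq_cycleSum (P := AddMonoidHom.mk' P hadd) hP s univ
    _ = _ := by
        rw [RotaBaxter.cycleSum, hpartitions]
        refine sum_congr rfl fun 𝒯 h𝒯 => ?_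
        rw [RotaBaxter.prod_cycleWeight_of_mem_partitions P s (hpartitions ▸ h𝒯), card_univ,
          Fintype.card_fin]

/-- **Bohnenblust–Spitzer formula.**  For an additive Rota–Baxter operator `P` of
weight 1 on a commutative ring `R` and `s₁, …, sₙ ∈ R` (`n ≥ 1`),
`∑_{σ ∈ Sₙ} P(s_{σ(1)}·P(s_{σ(2)}·(⋯·P(s_{σ(n)})⋯)))
  = ∑_𝒯 (−1)^{n−|𝒯|} ∏_{T∈𝒯}(|T|−1)! · ∏_{T∈𝒯} P(∏_{j∈T} s_j)`,
the right sum being over all unordered set partitions `𝒯` of `{1,…,n}` into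
nonempty blocks. -/
theorem bohnenblust_spitzer {R : Type*} [CommRing R] (P : R → R)
    (hadd : ∀ x y : R, P (x + y) = P x + P y)
    (hP : ∀ x y : R, P x * P y = P (x * P y) + P (P x * y) + P (x * y))
    (n : ℕ) (hn : 1 ≤ n) (s : Fin n → R) :
    ∑ σ : Equiv.Perm (Fin n), nestedRB P (List.ofFn fun i => s (σ i)) =
      ∑ 𝒯 ∈ (Finset.univ : Finset (Finset (Finset (Fin n)))).filter
          (fun 𝒯 => (∀ T ∈ 𝒯, T.Nonempty) ∧
            (∀ T ∈ 𝒯, ∀ T' ∈ 𝒯, T ≠ T' → Disjoint T T') ∧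
            𝒯.sup id = Finset.univ),
        ((-1 : ℤ) ^ (n - 𝒯.card) * ∏ T ∈ 𝒯, ((T.card - 1).factorial : ℤ)) •
          ∏ T ∈ 𝒯, P (∏ j ∈ T, s j) :=
  bohnenblust_spitzer_general P hadd hP n s
end

section
/- (Hoffman's partition identity) Let n ≥ 1 and let s₁, …, sₙ be integers with sᵢ ≥ 2 for all i. Then ∑_{σ ∈ Sₙ} ζ(s_{σ(1)}, …, s_{σ(n)}) = ∑_𝒯 (−1)^{n−|𝒯|} · (∏_{T ∈ 𝒯} (|T|−1)!) · ∏_{T ∈ 𝒯} ζ(∑_{j ∈ T} s_j), where the outer sum on the right runs over all unordered set partitions 𝒯 of {1, …, n} into nonempty blocks, |𝒯| is the number of blocks of 𝒯, and |T| is the size of the block T. -/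
/-- The multiple zeta value `ζ(s₁, …, s_k) = ∑_{n₁ > ⋯ > n_k ≥ 1} 1/(n₁^{s₁}⋯n_k^{s_k})`,
as a sum over strictly decreasing `k`-tuples of positive integers. -/
noncomputable def multipleZeta {k : ℕ} (s : Fin k → ℕ) : ℝ :=
  ∑' v : {v : Fin k → ℕ // StrictAnti v ∧ ∀ i, 0 < v i},
    ∏ i : Fin k, (1 : ℝ) / ((v.1 i : ℝ) ^ (s i))

/-!
Expand both sides over tuples `w : Fin n → ℕ` of summation indices, weighted by
`∏ i, 1 / w i ^ s i`. Sorting an injective tuple decreasingly recovers the permutation, so the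
left side is the sum over injective `w`; and `∏_{T ∈ 𝒯} ζ(∑_{j ∈ T} s_j)` is the sum over the `w`
that are constant on every block of `𝒯`. It remains to see that, for each `w`, the weights
`(-1)^{n-|𝒯|} ∏ (|T|-1)!` of the partitions `𝒯` on whose blocks `w` is constant add up to `1` if
`w` is injective and to `0` otherwise (Möbius inversion in the partition lattice). This goes by
induction, splitting off the block `B` of a fixed element `a`: if `F` is the fibre of `w` through
`a`, only the blocks with `|F \ B| ≤ 1` contribute, and their weights cancel unless `F = {a}`.
-/

open Finset Function

theorem hasSum_fin_pi_prod_of_nonneg {κ : Type*} {k : ℕ} (G : Fin k → κ → ℝ) {a : Fin k → ℝ}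
    (hG : ∀ i m, 0 ≤ G i m) (ha : ∀ i, HasSum (G i) (a i)) :
    HasSum (fun w : Fin k → κ => ∏ i, G i (w i)) (∏ i, a i) := by
  induction k with
  | zero => simp
  | succ k ih =>
    have htail : HasSum (fun w : Fin k → κ => ∏ i, G i.succ (w i)) (∏ i : Fin k, a i.succ) :=
      ih _ (fun i m => hG _ m) (fun i => ha i.succ)
    have hsum : Summable fun p : κ × (Fin k → κ) => G 0 p.1 * ∏ i : Fin k, G i.succ (p.2 i) :=
      Summable.mul_of_nonneg (f := G 0) (g := fun w : Fin k → κ => ∏ i : Fin k, G i.succ (w i))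
        (ha 0).summable htail.summable (hG 0) fun w => prod_nonneg fun i _ => hG _ _
    rw [Fin.prod_univ_succ, ← (Fin.consEquiv fun _ => κ).hasSum_iff]
    exact ((ha 0).mul htail hsum).congr_fun fun p => by
      simp [Fin.consEquiv, Fin.prod_univ_succ]

theorem hasSum_pi_prod_of_nonneg {ι κ : Type*} [Fintype ι] (G : ι → κ → ℝ) {a : ι → ℝ}
    (hG : ∀ i m, 0 ≤ G i m) (ha : ∀ i, HasSum (G i) (a i)) :
    HasSum (fun w : ι → κ => ∏ i, G i (w i)) (∏ i, a i) := by
  let e := Fintype.equivFin ι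
  have h := hasSum_fin_pi_prod_of_nonneg (fun j => G (e.symm j)) (fun j m => hG _ m)
    fun j => ha (e.symm j)
  rw [← e.symm.prod_comp a, ← (e.arrowCongr (Equiv.refl κ)).symm.hasSum_iff]
  convert h using 2 with w
  exact Fintype.prod_equiv e _ _ fun i => by simp [Equiv.arrowCongr]

section SetPartition

variable {ι : Type*} [DecidableEq ι]

structure IsSetPartition (𝒯 : Finset (Finset ι)) (A : Finset ι) : Prop where
  nonempty : ∀ T ∈ 𝒯, T.Nonempty
  disjoint : ∀ T ∈ 𝒯, ∀ T' ∈ 𝒯, T ≠ T' → Disjoint T T'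
  sup_eq : 𝒯.sup id = A

namespace IsSetPartition

variable {𝒯 : Finset (Finset ι)} {A B T T' : Finset ι} {a : ι}

lemma subset (h : IsSetPartition 𝒯 A) (hT : T ∈ 𝒯) : T ⊆ A :=
  h.sup_eq ▸ le_sup (f := id) hT

lemma mem_iff (h : IsSetPartition 𝒯 A) : a ∈ A ↔ ∃ T ∈ 𝒯, a ∈ T := by
  simp [← h.sup_eq, mem_sup]

lemma eq_of_mem (h : IsSetPartition 𝒯 A) (hT : T ∈ 𝒯) (hT' : T' ∈ 𝒯) (haT : a ∈ T)
    (haT' : a ∈ T') : T = T' :=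
  by_contra fun hne => disjoint_left.mp (h.disjoint T hT T' hT' hne) haT haT'

lemma eq_empty (h : IsSetPartition 𝒯 ∅) : 𝒯 = ∅ :=
  eq_empty_of_forall_notMem fun T hT =>
    (h.nonempty T hT).ne_empty (subset_empty.mp (h.subset hT))

lemma empty : IsSetPartition (∅ : Finset (Finset ι)) ∅ :=
  ⟨by simp, by simp, rfl⟩

lemma erase (h : IsSetPartition 𝒯 A) (hB : B ∈ 𝒯) : IsSetPartition (𝒯.erase B) (A \ B) where
  nonempty T hT := h.nonempty T (mem_of_mem_erase hT)
  disjoint T hT T' hT' := h.disjoint T (mem_of_mem_erase hT) T' (mem_of_mem_erase hT')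
  sup_eq := by
    ext x
    simp only [mem_sup, mem_erase, id, mem_sdiff, h.mem_iff]
    constructor
    · rintro ⟨T, ⟨hTB, hT⟩, hxT⟩
      exact ⟨⟨T, hT, hxT⟩, fun hxB => hTB (h.eq_of_mem hT hB hxT hxB)⟩
    · rintro ⟨⟨T, hT, hxT⟩, hxB⟩
      exact ⟨T, ⟨fun hTB => hxB (hTB ▸ hxT), hT⟩, hxT⟩

lemma notMem_of_sdiff (h : IsSetPartition 𝒯 (A \ B)) (hB : B.Nonempty) : B ∉ 𝒯 := fun hB𝒯 =>
  (mem_sdiff.mp (h.subset hB𝒯 hB.choose_spec)).2 hB.choose_spec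

lemma insert (h : IsSetPartition 𝒯 (A \ B)) (hBA : B ⊆ A) (hB : B.Nonempty) :
    IsSetPartition (insert B 𝒯) A where
  nonempty T hT := (mem_insert.mp hT).elim (· ▸ hB) (h.nonempty T)
  disjoint T hT T' hT' hne := by
    have hdisj : ∀ T ∈ 𝒯, Disjoint B T := fun T hT =>
      disjoint_of_subset_right (h.subset hT) disjoint_sdiff
    rcases mem_insert.mp hT with hTB | hT <;> rcases mem_insert.mp hT' with hT'B | hT'
    · exact absurd (hTB.trans hT'B.symm) hne
    · exact hTB ▸ hdisj T' hT'
    · exact hT'B ▸ (hdisj T hT).symm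
    · exact h.disjoint T hT T' hT' hne
  sup_eq := by rw [sup_insert, h.sup_eq, id, sup_eq_union, union_sdiff_of_subset hBA]

lemma sum_card_sub_one (h : IsSetPartition 𝒯 A) : ∑ T ∈ 𝒯, (T.card - 1) = A.card - 𝒯.card := by
  have hcard : ∑ T ∈ 𝒯, T.card = A.card := by
    rw [← h.sup_eq, sup_eq_biUnion, card_biUnion (t := id) h.disjoint]; rfl
  have hpos : ∑ T ∈ 𝒯, (T.card - 1) + 𝒯.card = ∑ T ∈ 𝒯, T.card := by
    rw [card_eq_sum_ones, ← sum_add_distrib]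
    exact sum_congr rfl fun T hT => Nat.sub_add_cancel (h.nonempty T hT).card_pos
  omega

lemma exists_block [Fintype ι] (h : IsSetPartition 𝒯 univ) :
    ∃ b : ι → 𝒯, ∀ i (T : 𝒯), i ∈ T.1 ↔ b i = T := by
  choose b hb𝒯 hib using fun i => h.mem_iff.mp (mem_univ i)
  exact ⟨fun i => ⟨b i, hb𝒯 i⟩, fun i T =>
    ⟨fun hiT => Subtype.ext (h.eq_of_mem (hb𝒯 i) T.2 (hib i) hiT), fun hT => hT ▸ hib i⟩⟩

end IsSetPartition

end SetPartition

section Mobius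

variable {ι β : Type*} [DecidableEq ι]

/-- The value `μ(0̂, 1̂)` of the Möbius function of the lattice of partitions of a `k`-set. -/
def blockWeight (R : Type*) [CommRing R] (k : ℕ) : R := (-1) ^ (k - 1) * (k - 1).factorial

variable {R : Type*} [CommRing R]

lemma IsSetPartition.prod_blockWeight {𝒯 : Finset (Finset ι)} {A : Finset ι}
    (h : IsSetPartition 𝒯 A) :
    ∏ T ∈ 𝒯, blockWeight R T.card =
      (-1) ^ (A.card - 𝒯.card) * ∏ T ∈ 𝒯, ((T.card - 1).factorial : R) := by
  rw [← h.sum_card_sub_one, ← prod_pow_eq_pow_sum, ← prod_mul_distrib]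
  rfl

lemma blockWeight_add_two (k : ℕ) : blockWeight R (k + 2) = -(k + 1) * blockWeight R (k + 1) := by
  rw [blockWeight, blockWeight, show k + 2 - 1 = k + 1 by omega, Nat.add_sub_cancel, pow_succ,
    Nat.factorial_succ]
  push_cast
  ring

lemma sum_blockWeight_mul_ite_card_sdiff_le_one {F : Finset ι} {a : ι} (ha : a ∈ F) :
    ∑ B ∈ F.powerset.filter (a ∈ ·),
        blockWeight R B.card * (if (F \ B).card ≤ 1 then 1 else 0) =
      if F.card ≤ 1 then 1 else 0 := by
  have hcompl : ∑ B ∈ F.powerset.filter (a ∈ ·),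
        blockWeight R B.card * (if (F \ B).card ≤ 1 then 1 else 0) =
      ∑ C ∈ (F.erase a).powerset,
        blockWeight R (F.card - C.card) * (if C.card ≤ 1 then 1 else 0) := by
    refine sum_nbij' (F \ ·) (F \ ·) ?_ ?_ ?_ ?_ ?_
    · intro B hB
      rw [mem_filter, mem_powerset] at hB
      exact mem_powerset.mpr fun x hx =>
        mem_erase.mpr ⟨fun h => (mem_sdiff.mp hx).2 (h ▸ hB.2), (mem_sdiff.mp hx).1⟩
    · intro C hC
      exact mem_filter.mpr ⟨mem_powerset.mpr sdiff_subset,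
        mem_sdiff.mpr ⟨ha, fun h => notMem_erase a F (mem_powerset.mp hC h)⟩⟩
    · exact fun B hB => Finset.sdiff_sdiff_eq_self (mem_powerset.mp (mem_filter.mp hB).1)
    · exact fun C hC => Finset.sdiff_sdiff_eq_self ((mem_powerset.mp hC).trans (erase_subset a F))
    · intro B hB
      rw [card_sdiff_of_subset (mem_powerset.mp (mem_filter.mp hB).1),
        Nat.sub_sub_self (card_le_card (mem_powerset.mp (mem_filter.mp hB).1))]
  obtain ⟨j, hj⟩ : ∃ j, F.card = j + 1 :=
    ⟨_, (Nat.succ_pred_eq_of_pos (card_pos.mpr ⟨a, ha⟩)).symm⟩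
  rw [hcompl,
    sum_powerset_apply_card (fun k => blockWeight R (F.card - k) * if k ≤ 1 then 1 else 0),
    card_erase_of_mem ha, hj, Nat.add_sub_cancel]
  rcases j with _ | i
  · simp [blockWeight]
  · rw [sum_range_succ', sum_range_succ', sum_eq_zero fun k _ => by simp]
    simp only [zero_add, Nat.choose_one_right, add_tsub_cancel_right, Std.le_refl, ↓reduceIte,
      mul_one, nsmul_eq_mul, Nat.cast_add, Nat.cast_one, Nat.choose_zero_right, tsub_zero,
      blockWeight_add_two, zero_le, one_smul, add_le_iff_nonpos_left, nonpos_iff_eq_zero,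
      Nat.add_eq_zero_iff, one_ne_zero, and_false]
    ring

lemma injOn_sdiff_iff [DecidableEq β] {w : ι → β} {A B : Finset ι} {a : ι}
    (hB : B ⊆ A.filter (w · = w a)) :
    Set.InjOn w ↑(A \ B) ↔
      Set.InjOn w ↑(A \ A.filter (w · = w a)) ∧ (A.filter (w · = w a) \ B).card ≤ 1 := by
  set F := A.filter (w · = w a)
  have hF : ∀ x ∈ F \ B, w x = w a := fun x hx => (mem_filter.mp (mem_sdiff.mp hx).1).2
  have hcross : ∀ x ∈ A \ F, ∀ y ∈ F \ B, w x ≠ w y := fun x hx y hy hxy =>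
    (mem_sdiff.mp hx).2 (mem_filter.mpr ⟨(mem_sdiff.mp hx).1, hxy.trans (hF y hy)⟩)
  have hconst : Set.InjOn w ↑(F \ B) ↔ (F \ B).card ≤ 1 := by
    rw [card_le_one]
    exact ⟨fun h x hx y hy => h hx hy ((hF x hx).trans (hF y hy).symm),
      fun h x hx y hy _ => h x hx y hy⟩
  rw [← sdiff_union_sdiff_cancel (filter_subset _ A) hB, coe_union,
    Set.injOn_union (disjoint_coe.mpr (disjoint_of_subset_right sdiff_subset sdiff_disjoint)),
    hconst]
  exact ⟨fun h => ⟨h.1, h.2.1⟩, fun h => ⟨h.1, h.2, hcross⟩⟩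

def ConstOnBlocks (w : ι → β) (𝒯 : Finset (Finset ι)) : Prop :=
  ∀ T ∈ 𝒯, ∀ i ∈ T, ∀ j ∈ T, w i = w j

variable [Fintype ι]

open scoped Classical in
noncomputable def setPartitions (A : Finset ι) : Finset (Finset (Finset ι)) :=
  univ.filter (IsSetPartition · A)

open scoped Classical in
noncomputable def setPartitionsConstOn (w : ι → β) (A : Finset ι) : Finset (Finset (Finset ι)) :=
  (setPartitions A).filter (ConstOnBlocks w)

lemma setPartitions_eq_filter (A : Finset ι) :
    setPartitions A = univ.filter fun 𝒯 : Finset (Finset ι) => (∀ T ∈ 𝒯, T.Nonempty) ∧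
      (∀ T ∈ 𝒯, ∀ T' ∈ 𝒯, T ≠ T' → Disjoint T T') ∧ 𝒯.sup id = A := by
  ext 𝒯
  simp only [setPartitions, mem_filter, mem_univ, true_and]
  exact ⟨fun h => ⟨h.1, h.2, h.3⟩, fun h => ⟨h.1, h.2.1, h.2.2⟩⟩

lemma mem_setPartitions {A : Finset ι} {𝒯 : Finset (Finset ι)} :
    𝒯 ∈ setPartitions A ↔ IsSetPartition 𝒯 A := by
  simp [setPartitions]

lemma mem_setPartitionsConstOn {w : ι → β} {A : Finset ι} {𝒯 : Finset (Finset ι)} :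
    𝒯 ∈ setPartitionsConstOn w A ↔ IsSetPartition 𝒯 A ∧ ConstOnBlocks w 𝒯 := by
  simp [setPartitionsConstOn, mem_setPartitions]

lemma setPartitionsConstOn_empty (w : ι → β) : setPartitionsConstOn w ∅ = {∅} := by
  ext 𝒯
  simp only [mem_setPartitionsConstOn, mem_singleton]
  exact ⟨fun h => h.1.eq_empty, fun h => h ▸ ⟨IsSetPartition.empty, by simp [ConstOnBlocks]⟩⟩

lemma insert_mem_setPartitionsConstOn [DecidableEq β] {w : ι → β} {A B : Finset ι} {a : ι}
    {𝒯 : Finset (Finset ι)} (hB : B ⊆ A.filter (w · = w a)) (haB : a ∈ B)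
    (h𝒯 : 𝒯 ∈ setPartitionsConstOn w (A \ B)) : insert B 𝒯 ∈ setPartitionsConstOn w A := by
  obtain ⟨h𝒯, h𝒯w⟩ := mem_setPartitionsConstOn.mp h𝒯
  refine mem_setPartitionsConstOn.mpr
    ⟨h𝒯.insert (hB.trans (filter_subset _ A)) ⟨a, haB⟩, fun T hT => ?_⟩
  rcases mem_insert.mp hT with rfl | hT
  · exact fun i hi j hj => (mem_filter.mp (hB hi)).2.trans (mem_filter.mp (hB hj)).2.symm
  · exact h𝒯w T hT

/-- `(B, 𝒯) ↦ insert B 𝒯` is a bijection onto the partitions on the left; `B` is the block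
through `a`. -/
lemma sum_setPartitionsConstOn_prod [DecidableEq β] (w : ι → β) (f : Finset ι → R)
    {A : Finset ι} {a : ι} (ha : a ∈ A) :
    ∑ 𝒯 ∈ setPartitionsConstOn w A, ∏ T ∈ 𝒯, f T =
      ∑ B ∈ (A.filter (w · = w a)).powerset.filter (a ∈ ·),
        f B * ∑ 𝒯 ∈ setPartitionsConstOn w (A \ B), ∏ T ∈ 𝒯, f T := by
  simp_rw [mul_sum]
  rw [sum_sigma']
  symm
  refine sum_bij (fun p _ => insert p.1 p.2) ?_ ?_ ?_ ?_
  · rintro ⟨B, 𝒯⟩ hp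
    simp only [mem_sigma, mem_filter, mem_powerset] at hp
    exact insert_mem_setPartitionsConstOn hp.1.1 hp.1.2 hp.2
  · rintro ⟨B, 𝒯⟩ hp ⟨B', 𝒯'⟩ hp' heq
    simp only [mem_sigma, mem_filter, mem_powerset] at hp hp'
    obtain ⟨⟨hB, haB⟩, h𝒯⟩ := hp
    have hpart := (mem_setPartitionsConstOn.mp (insert_mem_setPartitionsConstOn hB haB h𝒯)).1
    obtain rfl : B = B' := hpart.eq_of_mem (mem_insert_self B 𝒯)
      (heq ▸ mem_insert_self B' 𝒯') haB hp'.1.2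
    have := congrArg (erase · B) heq
    simp only [erase_insert ((mem_setPartitionsConstOn.mp h𝒯).1.notMem_of_sdiff ⟨a, haB⟩),
      erase_insert ((mem_setPartitionsConstOn.mp hp'.2).1.notMem_of_sdiff ⟨a, haB⟩)] at this
    rw [this]
  · intro 𝒯 h𝒯
    obtain ⟨h𝒯, h𝒯w⟩ := mem_setPartitionsConstOn.mp h𝒯
    obtain ⟨B, hB, haB⟩ := h𝒯.mem_iff.mp ha
    refine ⟨⟨B, 𝒯.erase B⟩, ?_, insert_erase hB⟩
    simp only [mem_sigma, mem_filter, mem_powerset, mem_setPartitionsConstOn]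
    exact ⟨⟨fun i hi => mem_filter.mpr ⟨h𝒯.subset hB hi, h𝒯w B hB i hi a haB⟩, haB⟩,
      h𝒯.erase hB, fun T hT => h𝒯w T (mem_of_mem_erase hT)⟩
  · rintro ⟨B, 𝒯⟩ hp
    simp only [mem_sigma, mem_filter, mem_powerset] at hp
    exact (prod_insert ((mem_setPartitionsConstOn.mp hp.2).1.notMem_of_sdiff ⟨a, hp.1.2⟩)).symm

theorem sum_setPartitionsConstOn_prod_blockWeight [DecidableEq β] (w : ι → β) (A : Finset ι) :
    ∑ 𝒯 ∈ setPartitionsConstOn w A, ∏ T ∈ 𝒯, blockWeight R T.card =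
      if Set.InjOn w A then 1 else 0 := by
  induction A using Finset.strongInduction with
  | H A ih =>
  rcases A.eq_empty_or_nonempty with rfl | ⟨a, ha⟩
  · simp [setPartitionsConstOn_empty]
  set F := A.filter (w · = w a)
  have hinj : ∀ B ⊆ F, (if Set.InjOn w ↑(A \ B) then (1 : R) else 0) =
      (if Set.InjOn w ↑(A \ F) then 1 else 0) * if (F \ B).card ≤ 1 then 1 else 0 :=
    fun B hB => by simp only [F, injOn_sdiff_iff hB, ite_zero_mul_ite_zero, mul_one]
  rw [sum_setPartitionsConstOn_prod w _ ha]
  calc ∑ B ∈ F.powerset.filter (a ∈ ·), blockWeight R B.card *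
        ∑ 𝒯 ∈ setPartitionsConstOn w (A \ B), ∏ T ∈ 𝒯, blockWeight R T.card
      = ∑ B ∈ F.powerset.filter (a ∈ ·), blockWeight R B.card *
          ((if Set.InjOn w ↑(A \ F) then 1 else 0) * if (F \ B).card ≤ 1 then 1 else 0) := by
        refine sum_congr rfl fun B hB => ?_
        obtain ⟨hBF, haB⟩ := mem_filter.mp hB
        rw [ih _ (sdiff_ssubset ((mem_powerset.mp hBF).trans (filter_subset _ A)) ⟨a, haB⟩),
          hinj B (mem_powerset.mp hBF)]
    _ = (if Set.InjOn w ↑(A \ F) then 1 else 0) *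
          ∑ B ∈ F.powerset.filter (a ∈ ·),
            blockWeight R B.card * if (F \ B).card ≤ 1 then 1 else 0 := by
        rw [mul_sum]
        exact sum_congr rfl fun B _ => by ring
    _ = (if Set.InjOn w ↑(A \ F) then 1 else 0) * if F.card ≤ 1 then 1 else 0 := by
        rw [sum_blockWeight_mul_ite_card_sdiff_le_one (F := F) (mem_filter.mpr ⟨ha, rfl⟩)]
    _ = if Set.InjOn w A then 1 else 0 := by
        simpa only [sdiff_empty] using (hinj ∅ (empty_subset _)).symm

theorem sum_setPartitions_mul_indicator [DecidableEq β] (G : (ι → β) → R) (w : ι → β) :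
    ∑ 𝒯 ∈ setPartitions (univ : Finset ι),
        (∏ T ∈ 𝒯, blockWeight R T.card) * {w | ConstOnBlocks w 𝒯}.indicator G w =
      {w | Injective w}.indicator G w := by
  classical
  simp only [Set.indicator_apply, Set.mem_ofPred_eq, mul_ite, mul_zero, ← sum_filter, ← sum_mul]
  rw [← setPartitionsConstOn, sum_setPartitionsConstOn_prod_blockWeight]
  simp only [coe_univ, Set.injOn_univ, ite_mul, one_mul, zero_mul]

end Mobius

section Zeta

variable {ι : Type*}

lemma one_lt_sum {s : ι → ℕ} (hs : ∀ i, 1 < s i) {T : Finset ι} (hT : T.Nonempty) :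
    1 < ∑ j ∈ T, s j :=
  (hs _).trans_le (single_le_sum (fun _ _ => Nat.zero_le _) hT.choose_spec)

variable [Fintype ι]

noncomputable def zetaSummand (s w : ι → ℕ) : ℝ := ∏ i, 1 / (w i : ℝ) ^ s i

lemma hasSum_zetaSummand {s : ι → ℕ} (hs : ∀ i, 1 < s i) :
    HasSum (zetaSummand s) (∏ i, ∑' m : ℕ, 1 / (m : ℝ) ^ s i) :=
  hasSum_pi_prod_of_nonneg (fun i (m : ℕ) => 1 / (m : ℝ) ^ s i) (fun _ _ => by positivity)
    fun i => (Real.summable_one_div_nat_pow.mpr (hs i)).hasSum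

/-- Since `1 / 0 = 0`, tuples with a zero entry contribute nothing to sums over all of
`ι → ℕ`. -/
lemma zetaSummand_eq_zero {s w : ι → ℕ} {i : ι} (hs : s i ≠ 0) (hw : w i = 0) :
    zetaSummand s w = 0 :=
  prod_eq_zero (mem_univ i) (by simp [hw, hs])

lemma zetaSummand_comp_symm (s w : ι → ℕ) (σ : Equiv.Perm ι) :
    zetaSummand s (w ∘ σ.symm) = zetaSummand (s ∘ σ) w := by
  rw [zetaSummand, ← Equiv.prod_comp σ]
  simp [zetaSummand]

lemma multipleZeta_single {t : ℕ} (ht : t ≠ 0) :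
    multipleZeta (fun _ : Fin 1 => t) = ∑' m : ℕ, 1 / (m : ℝ) ^ t := by
  let e : {v : Fin 1 → ℕ // StrictAnti v ∧ ∀ i, 0 < v i} → ℕ := fun v => v.1 0
  have he : Injective e := fun v u h => Subtype.ext (funext fun i => Subsingleton.elim i 0 ▸ h)
  have hrange : support (fun m : ℕ => 1 / (m : ℝ) ^ t) ⊆ Set.range e := by
    intro m hm
    have hm0 : m ≠ 0 := by rintro rfl; simp [ht] at hm
    exact ⟨⟨fun _ => m, Subsingleton.strictAnti _, fun _ => Nat.pos_of_ne_zero hm0⟩, rfl⟩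
  rw [← he.tsum_eq hrange, multipleZeta]
  simp [e]

theorem hasSum_indicator_constOnBlocks [DecidableEq ι] {s : ι → ℕ} (hs : ∀ i, 1 < s i)
    {𝒯 : Finset (Finset ι)} (h𝒯 : IsSetPartition 𝒯 univ) :
    HasSum ({w | ConstOnBlocks w 𝒯}.indicator (zetaSummand s))
      (∏ T ∈ 𝒯, ∑' m : ℕ, 1 / (m : ℝ) ^ ∑ j ∈ T, s j) := by
  obtain ⟨b, hb⟩ := h𝒯.exists_block
  let ψ : (𝒯 → ℕ) → ι → ℕ := fun m i => m (b i)
  have hψ : Injective ψ := fun m m' h => funext fun T => by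
    obtain ⟨i, hi⟩ := h𝒯.nonempty T.1 T.2
    simpa [ψ, (hb i T).mp hi] using congrFun h i
  have hconst : ∀ m, ConstOnBlocks (ψ m) 𝒯 := fun m T hT i hi j hj => by
    simp only [ψ, (hb i ⟨T, hT⟩).mp hi, (hb j ⟨T, hT⟩).mp hj]
  have hrange : ∀ w, ConstOnBlocks w 𝒯 → w ∈ Set.range ψ := fun w hw =>
    ⟨fun T => w (h𝒯.nonempty T.1 T.2).choose, funext fun i =>
      hw _ (b i).2 _ (h𝒯.nonempty _ (b i).2).choose_spec i ((hb i (b i)).mpr rfl)⟩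
  rw [← hψ.hasSum_iff fun w hw => Set.indicator_of_notMem (fun h => hw (hrange w h)) _,
    ← prod_coe_sort]
  refine (hasSum_pi_prod_of_nonneg (fun (T : 𝒯) (m : ℕ) => 1 / (m : ℝ) ^ ∑ j ∈ T.1, s j)
    (fun _ _ => by positivity) fun T =>
      (Real.summable_one_div_nat_pow.mpr (one_lt_sum hs (h𝒯.nonempty T.1 T.2))).hasSum).congr_fun
    fun m => ?_
  rw [comp_apply, Set.indicator_of_mem (hconst m), zetaSummand, ← prod_fiberwise univ b]
  refine prod_congr rfl fun T _ => ?_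
  rw [show univ.filter (b · = T) = T.1 by ext i; simp [hb], one_div, ← inv_pow,
    ← prod_pow_eq_pow_sum]
  exact prod_congr rfl fun i hi => by simp [ψ, (hb i T).mp hi]

lemma existsUnique_perm_strictAnti {n : ℕ} {α : Type*} [LinearOrder α] {w : Fin n → α}
    (hw : Injective w) : ∃! σ : Equiv.Perm (Fin n), StrictAnti (w ∘ σ) := by
  refine ⟨Tuple.sort (OrderDual.toDual ∘ w), ?_, fun τ hτ => ?_⟩
  · exact (Tuple.monotone_sort (OrderDual.toDual ∘ w)).strictMono_of_injective
      (hw.comp (Equiv.injective _))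
  · exact Equiv.ext fun i => hw (congrFun (Tuple.unique_antitone hτ.antitone
      (Tuple.monotone_sort (OrderDual.toDual ∘ w))) i)

theorem hasSum_indicator_injective {n : ℕ} {s : Fin n → ℕ} (hs : ∀ i, 1 < s i) :
    HasSum ({w | Injective w}.indicator (zetaSummand s))
      (∑ σ : Equiv.Perm (Fin n), multipleZeta (fun i => s (σ i))) := by
  let Φ : Equiv.Perm (Fin n) × {v : Fin n → ℕ // StrictAnti v ∧ ∀ i, 0 < v i} → Fin n → ℕ :=
    fun p => p.2.1 ∘ p.1.symm
  have hΦinj : ∀ p, Injective (Φ p) := fun p => p.2.2.1.injective.comp p.1.symm.injective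
  have hΦ : Injective Φ := by
    rintro ⟨σ, v⟩ ⟨τ, u⟩ h
    obtain rfl : σ = τ := (existsUnique_perm_strictAnti (hΦinj (σ, v))).unique
      (by simpa [Φ, comp_def] using v.2.1) (by rw [h]; simpa [Φ, comp_def] using u.2.1)
    exact Prod.ext rfl (Subtype.ext (funext fun i => by simpa [Φ] using congrFun h (σ i)))
  have hrange : ∀ w ∉ Set.range Φ, {w | Injective w}.indicator (zetaSummand s) w = 0 := by
    intro w hw
    by_cases hinj : Injective w
    · obtain ⟨σ, hσ, -⟩ := existsUnique_perm_strictAnti hinj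
      by_contra hne
      refine hw ⟨(σ, ⟨w ∘ σ, hσ, fun i => Nat.pos_of_ne_zero fun h0 => hne ?_⟩), ?_⟩
      · exact (Set.indicator_of_mem (s := {w | Injective w}) hinj _).trans
          (zetaSummand_eq_zero (Nat.ne_zero_of_lt (hs (σ i))) h0)
      · exact funext fun i => by simp [Φ]
    · exact Set.indicator_of_notMem hinj _
  rw [← hΦ.hasSum_iff hrange]
  have hsum : Summable ({w | Injective w}.indicator (zetaSummand s) ∘ Φ) :=
    ((hasSum_zetaSummand hs).summable.indicator _).comp_injective hΦ
  convert hsum.hasSum using 1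
  rw [(hsum.hasSum.prod_fiberwise fun σ =>
    (hsum.comp_injective (Prod.mk_right_injective σ)).hasSum).unique (hasSum_fintype _)]
  refine sum_congr rfl fun σ _ => tsum_congr fun v => ?_
  exact ((Set.indicator_of_mem (hΦinj (σ, v)) _).trans (zetaSummand_comp_symm _ _ _)).symm

end Zeta

theorem hoffman_partition_identity_general
    (n : ℕ) (s : Fin n → ℕ) (hs : ∀ i, 2 ≤ s i) :
    ∑ σ : Equiv.Perm (Fin n), multipleZeta (fun i => s (σ i)) =
      ∑ 𝒯 ∈ (Finset.univ : Finset (Finset (Finset (Fin n)))).filter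
          (fun 𝒯 => (∀ T ∈ 𝒯, T.Nonempty) ∧
            (∀ T ∈ 𝒯, ∀ T' ∈ 𝒯, T ≠ T' → Disjoint T T') ∧
            𝒯.sup id = Finset.univ),
        ((-1 : ℝ) ^ (n - 𝒯.card) * ∏ T ∈ 𝒯, ((T.card - 1).factorial : ℝ)) *
          ∏ T ∈ 𝒯, multipleZeta (fun _ : Fin 1 => ∑ j ∈ T, s j) := by
  rw [← setPartitions_eq_filter]
  have hR := hasSum_sum fun 𝒯 (h𝒯 : 𝒯 ∈ setPartitions univ) =>
    (hasSum_indicator_constOnBlocks hs (mem_setPartitions.mp h𝒯)).mul_left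
      (∏ T ∈ 𝒯, blockWeight ℝ T.card)
  refine ((hasSum_indicator_injective hs).unique (hR.congr_fun fun w =>
    (sum_setPartitions_mul_indicator _ w).symm)).trans (sum_congr rfl fun 𝒯 h𝒯 => ?_)
  have h𝒯 := mem_setPartitions.mp h𝒯
  rw [h𝒯.prod_blockWeight, card_univ, Fintype.card_fin]
  exact congrArg _ (prod_congr rfl fun T hT =>
    (multipleZeta_single (Nat.ne_zero_of_lt (one_lt_sum hs (h𝒯.nonempty T hT)))).symm)

/-- **Hoffman's partition identity.**  For integers `s₁, …, sₙ ≥ 2`,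
`∑_{σ ∈ Sₙ} ζ(s_{σ(1)}, …, s_{σ(n)})
  = ∑_𝒯 (−1)^{n−|𝒯|} ∏_{T∈𝒯}(|T|−1)! · ∏_{T∈𝒯} ζ(∑_{j∈T} s_j)`,
the right sum being over all unordered set partitions `𝒯` of `{1,…,n}` into
nonempty blocks. -/
theorem hoffman_partition_identity
    (n : ℕ) (hn : 1 ≤ n) (s : Fin n → ℕ) (hs : ∀ i, 2 ≤ s i) :
    ∑ σ : Equiv.Perm (Fin n), multipleZeta (fun i => s (σ i)) =
      ∑ 𝒯 ∈ (Finset.univ : Finset (Finset (Finset (Fin n)))).filter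
          (fun 𝒯 => (∀ T ∈ 𝒯, T.Nonempty) ∧
            (∀ T ∈ 𝒯, ∀ T' ∈ 𝒯, T ≠ T' → Disjoint T T') ∧
            𝒯.sup id = Finset.univ),
        ((-1 : ℝ) ^ (n - 𝒯.card) * ∏ T ∈ 𝒯, ((T.card - 1).factorial : ℝ)) *
          ∏ T ∈ 𝒯, multipleZeta (fun _ : Fin 1 => ∑ j ∈ T, s j) :=
  hoffman_partition_identity_general n s hs
end

section
/- ζ(2)·ζ(2) = 4·ζ(3,1) + 2·ζ(2,2); that is, (∑_{n≥1} 1/n²)² = 4·∑_{n > m ≥ 1} 1/(n³m) + 2·∑_{n > m ≥ 1} 1/(n²m²). -/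
open scoped BigOperators

private lemma pf_identity (a b : ℝ) (ha : 0 < a) (hb : 0 < b) :
    1 / (a ^ 2 * b ^ 2) =
      1 / ((a + b) ^ 2 * a ^ 2) + 1 / ((a + b) ^ 2 * b ^ 2) +
      2 * (1 / ((a + b) ^ 3 * a)) + 2 * (1 / ((a + b) ^ 3 * b)) := by
  have hab : 0 < a + b := by linarith
  field_simp
  ring

/-- `ζ(2)·ζ(2) = 4·ζ(3,1) + 2·ζ(2,2)`:
`(∑_{n≥1} 1/n²)² = 4·∑_{n>m≥1} 1/(n³m) + 2·∑_{n>m≥1} 1/(n²m²)`. -/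
theorem zeta_two_sq_eq_four_zeta31_add_two_zeta22 :
    (∑' n : ℕ, (1 : ℝ) / ((n : ℝ) + 1) ^ 2) * (∑' n : ℕ, (1 : ℝ) / ((n : ℝ) + 1) ^ 2) =
      4 * (∑' p : {p : ℕ × ℕ // 0 < p.2 ∧ p.2 < p.1},
            (1 : ℝ) / (((p.1.1 : ℝ) ^ 3) * ((p.1.2 : ℝ) ^ 1))) +
      2 * (∑' p : {p : ℕ × ℕ // 0 < p.2 ∧ p.2 < p.1},
            (1 : ℝ) / (((p.1.1 : ℝ) ^ 2) * ((p.1.2 : ℝ) ^ 2))) := by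
  classical
  set I := {p : ℕ × ℕ // 0 < p.2 ∧ p.2 < p.1} with hI
  set f : ℕ → ℝ := fun n => (1 : ℝ) / ((n : ℝ) + 1) ^ 2 with hfdef
  have hf : Summable f := by
    have : Summable (fun n : ℕ => (1 : ℝ) / (n : ℝ) ^ 2) :=
      (Real.summable_one_div_nat_pow).2 (by norm_num)
    have := (summable_nat_add_iff 1).2 this
    simpa [f] using this
  have hfnonneg : ∀ n, 0 ≤ f n := fun n => by positivity
  -- the product as a sum over pairs
  have hpairsum : Summable (fun x : ℕ × ℕ => f x.1 * f x.2) :=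
    hf.mul_of_nonneg hf hfnonneg hfnonneg
  have hprod : (∑' n, f n) * (∑' n, f n) = ∑' x : ℕ × ℕ, f x.1 * f x.2 :=
    Summable.tsum_mul_tsum hf hf hpairsum
  -- the reindexing equivalence
  have key : ∀ m k : ℕ, 0 < m + 1 ∧ m + 1 < m + k + 2 := fun m k => ⟨Nat.succ_pos m, by omega⟩
  let e : ℕ × ℕ ≃ I :=
  { toFun := fun x => ⟨(x.1 + x.2 + 2, x.1 + 1), key x.1 x.2⟩
    invFun := fun p => (p.1.2 - 1, p.1.1 - p.1.2 - 1)
    left_inv := fun x => by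
      obtain ⟨m, k⟩ := x
      rw [Prod.ext_iff]
      dsimp only
      omega
    right_inv := fun p => by
      obtain ⟨⟨N, m⟩, hm, hmN⟩ := p
      refine Subtype.ext ?_
      rw [Prod.ext_iff]
      dsimp only
      omega }
  -- the function on I corresponding to the pair sum
  set F : I → ℝ := fun p =>
    (1 : ℝ) / (((p.1.2 : ℝ)) ^ 2 * ((p.1.1 : ℝ) - (p.1.2 : ℝ)) ^ 2) with hFdef
  have hFe : ∀ x : ℕ × ℕ, F (e x) = f x.1 * f x.2 := by
    intro ⟨m, k⟩
    simp only [F, f, e, Equiv.coe_fn_mk]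
    push_cast
    have h1 : ((m : ℝ) + k + 2) - (m + 1) = (k : ℝ) + 1 := by ring
    rw [h1]
    rw [div_mul_div_comm, one_mul]
  have hFsum : Summable F := by
    rw [← Equiv.summable_iff e]
    exact hpairsum.congr fun x => (hFe x).symm
  have hsumF : (∑' n, f n) * (∑' n, f n) = ∑' p : I, F p := by
    rw [hprod, ← Equiv.tsum_eq e F]
    exact tsum_congr fun x => (hFe x).symm
  -- component functions
  set A : I → ℝ := fun p => (1 : ℝ) / (((p.1.1 : ℝ) ^ 2) * ((p.1.2 : ℝ) ^ 2)) with hAdef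
  set A' : I → ℝ := fun p =>
    (1 : ℝ) / (((p.1.1 : ℝ) ^ 2) * (((p.1.1 : ℝ) - (p.1.2 : ℝ)) ^ 2)) with hA'def
  set B : I → ℝ := fun p => (1 : ℝ) / (((p.1.1 : ℝ) ^ 3) * ((p.1.2 : ℝ) ^ 1)) with hBdef
  set B' : I → ℝ := fun p =>
    (1 : ℝ) / (((p.1.1 : ℝ) ^ 3) * ((p.1.1 : ℝ) - (p.1.2 : ℝ))) with hB'def
  have hbasic : ∀ p : I, (0 : ℝ) < (p.1.2 : ℝ) ∧ (0 : ℝ) < (p.1.1 : ℝ) - (p.1.2 : ℝ) := by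
    rintro ⟨⟨N, m⟩, hm, hmN⟩
    constructor
    · exact_mod_cast hm
    · have : (m : ℝ) < N := by exact_mod_cast hmN
      linarith
  have hdecomp : ∀ p : I, F p = A p + A' p + 2 * B p + 2 * B' p := by
    intro p
    obtain ⟨hm, hb⟩ := hbasic p
    have := pf_identity (p.1.2 : ℝ) ((p.1.1 : ℝ) - (p.1.2 : ℝ)) hm hb
    have hN : (p.1.2 : ℝ) + ((p.1.1 : ℝ) - (p.1.2 : ℝ)) = (p.1.1 : ℝ) := by ring
    rw [hN] at this
    simpa [F, A, A', B, B', pow_one] using this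
  have hAnn : ∀ p : I, 0 ≤ A p := fun p => by
    obtain ⟨hm, hb⟩ := hbasic p; positivity
  have hA'nn : ∀ p : I, 0 ≤ A' p := fun p => by
    obtain ⟨hm, hb⟩ := hbasic p
    have hN : (0:ℝ) < (p.1.1 : ℝ) := by linarith
    positivity
  have hBnn : ∀ p : I, 0 ≤ B p := fun p => by
    obtain ⟨hm, hb⟩ := hbasic p
    have hN : (0:ℝ) < (p.1.1 : ℝ) := by linarith
    positivity
  have hB'nn : ∀ p : I, 0 ≤ B' p := fun p => by
    obtain ⟨hm, hb⟩ := hbasic p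
    have hN : (0:ℝ) < (p.1.1 : ℝ) := by linarith
    positivity
  have hle : ∀ (G : I → ℝ), (∀ p, 0 ≤ G p) →
      (∀ p, G p ≤ F p) → Summable G := fun G h1 h2 =>
    Summable.of_nonneg_of_le h1 h2 hFsum
  have hAsum : Summable A := hle A hAnn fun p => by
    rw [hdecomp p]; nlinarith [hA'nn p, hBnn p, hB'nn p]
  have hA'sum : Summable A' := hle A' hA'nn fun p => by
    rw [hdecomp p]; nlinarith [hAnn p, hBnn p, hB'nn p]
  have hBsum : Summable B := hle B hBnn fun p => by
    rw [hdecomp p]; nlinarith [hAnn p, hA'nn p, hB'nn p, hBnn p]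
  have hB'sum : Summable B' := hle B' hB'nn fun p => by
    rw [hdecomp p]; nlinarith [hAnn p, hA'nn p, hBnn p, hB'nn p]
  -- the involution (N, m) ↦ (N, N - m)
  let σ : I ≃ I :=
  { toFun := fun p => ⟨(p.1.1, p.1.1 - p.1.2), by
      obtain ⟨⟨N, m⟩, hm, hmN⟩ := p; dsimp only; omega⟩
    invFun := fun p => ⟨(p.1.1, p.1.1 - p.1.2), by
      obtain ⟨⟨N, m⟩, hm, hmN⟩ := p; dsimp only; omega⟩
    left_inv := fun p => by
      obtain ⟨⟨N, m⟩, hm, hmN⟩ := p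
      refine Subtype.ext ?_
      rw [Prod.ext_iff]
      dsimp only
      omega
    right_inv := fun p => by
      obtain ⟨⟨N, m⟩, hm, hmN⟩ := p
      refine Subtype.ext ?_
      rw [Prod.ext_iff]
      dsimp only
      omega }
  have hAσ : ∀ p : I, A (σ p) = A' p := by
    rintro ⟨⟨N, m⟩, hm, hmN⟩
    simp only [A, A', σ, Equiv.coe_fn_mk]
    rw [Nat.cast_sub hmN.le]
  have hBσ : ∀ p : I, B (σ p) = B' p := by
    rintro ⟨⟨N, m⟩, hm, hmN⟩
    simp only [B, B', σ, Equiv.coe_fn_mk, pow_one]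
    rw [Nat.cast_sub hmN.le]
  have hA'eq : ∑' p : I, A' p = ∑' p : I, A p := by
    rw [← Equiv.tsum_eq σ A]
    exact tsum_congr fun p => (hAσ p).symm
  have hB'eq : ∑' p : I, B' p = ∑' p : I, B p := by
    rw [← Equiv.tsum_eq σ B]
    exact tsum_congr fun p => (hBσ p).symm
  -- put it together
  have hsplit : ∑' p : I, F p =
      (∑' p : I, A p) + (∑' p : I, A' p) + 2 * (∑' p : I, B p) + 2 * (∑' p : I, B' p) := by
    have h1 : ∑' p : I, F p = ∑' p : I, (A p + A' p + 2 * B p + 2 * B' p) :=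
      tsum_congr hdecomp
    rw [h1, Summable.tsum_add ((hAsum.add hA'sum).add (hBsum.mul_left 2))
        (hB'sum.mul_left 2),
      Summable.tsum_add (hAsum.add hA'sum) (hBsum.mul_left 2), Summable.tsum_add hAsum hA'sum,
      tsum_mul_left, tsum_mul_left]
  rw [hsumF, hsplit, hA'eq, hB'eq]
  ring
end

section
/- ζ(3,1) = (1/4)·ζ(4); that is, ∑_{n > m ≥ 1} 1/(n³m) = (1/4)·∑_{n≥1} 1/n⁴. -/
open NNReal ENNReal Set

namespace Zeta31Aux

/-- key partial-fraction identity -/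
lemma key_id (a b : ℝ≥0) (ha : a ≠ 0) (hb : b ≠ 0) :
    1/(a^2*b^2) = 1/((a+b)^2*a^2) + 1/((a+b)^2*b^2) + 1/((a+b)^3*a) + 1/((a+b)^3*a)
      + 1/((a+b)^3*b) + 1/((a+b)^3*b) := by
  have h : a + b ≠ 0 := by simp [ha]
  field_simp
  ring

-- the basic functions, valued in ℝ≥0∞
noncomputable def F22 (p : ℕ × ℕ) : ℝ≥0∞ := ((1 / ((p.1 : ℝ≥0)^2 * (p.2 : ℝ≥0)^2) : ℝ≥0) : ℝ≥0∞)
noncomputable def G (p : ℕ × ℕ) : ℝ≥0∞ :=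
  ((1 / ((p.2 : ℝ≥0)^2 * (((p.1 - p.2 : ℕ)) : ℝ≥0)^2) : ℝ≥0) : ℝ≥0∞)
noncomputable def GU (p : ℕ × ℕ) : ℝ≥0∞ :=
  ((1 / ((p.1 : ℝ≥0)^2 * (((p.1 - p.2 : ℕ)) : ℝ≥0)^2) : ℝ≥0) : ℝ≥0∞)
noncomputable def wNN (p : ℕ × ℕ) : ℝ≥0 := 1 / ((p.1 : ℝ≥0)^3 * (p.2 : ℝ≥0))
noncomputable def W (p : ℕ × ℕ) : ℝ≥0∞ := ((wNN p : ℝ≥0) : ℝ≥0∞)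
noncomputable def WU (p : ℕ × ℕ) : ℝ≥0∞ :=
  ((1 / ((p.1 : ℝ≥0)^3 * (((p.1 - p.2 : ℕ)) : ℝ≥0)) : ℝ≥0) : ℝ≥0∞)

-- the index sets
def aS : Set (ℕ × ℕ) := {p | 0 < p.1 ∧ 0 < p.2}
def cS : Set (ℕ × ℕ) := {p | 0 < p.2 ∧ p.2 < p.1}
def uS : Set (ℕ × ℕ) := {p | 0 < p.1 ∧ p.1 < p.2}
def dS : Set (ℕ × ℕ) := {p | 0 < p.1 ∧ p.1 = p.2}

-- equivalences
def eAC : aS ≃ cS where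
  toFun q := ⟨(q.1.1 + q.1.2, q.1.1), by
    obtain ⟨h1, h2⟩ := q.2; exact ⟨h1, by omega⟩⟩
  invFun q := ⟨(q.1.2, q.1.1 - q.1.2), by
    obtain ⟨h1, h2⟩ := q.2; exact ⟨h1, by omega⟩⟩
  left_inv q := Subtype.ext (by
    obtain ⟨h1, h2⟩ := q.2
    exact Prod.ext rfl (by simp))
  right_inv q := Subtype.ext (by
    obtain ⟨h1, h2⟩ := q.2
    exact Prod.ext (by simp; omega) rfl)

def eUC : uS ≃ cS where
  toFun q := ⟨(q.1.2, q.1.1), ⟨q.2.1, q.2.2⟩⟩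
  invFun q := ⟨(q.1.2, q.1.1), ⟨q.2.1, q.2.2⟩⟩
  left_inv _ := Subtype.ext rfl
  right_inv _ := Subtype.ext rfl

def eCC : cS ≃ cS where
  toFun q := ⟨(q.1.1, q.1.1 - q.1.2), by obtain ⟨h1, h2⟩ := q.2; exact ⟨by omega, by omega⟩⟩
  invFun q := ⟨(q.1.1, q.1.1 - q.1.2), by obtain ⟨h1, h2⟩ := q.2; exact ⟨by omega, by omega⟩⟩
  left_inv q := Subtype.ext (by
    obtain ⟨h1, h2⟩ := q.2
    exact Prod.ext rfl (by simp; omega))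
  right_inv q := Subtype.ext (by
    obtain ⟨h1, h2⟩ := q.2
    exact Prod.ext rfl (by simp; omega))

def eD : ℕ ≃ dS where
  toFun n := ⟨(n + 1, n + 1), by constructor <;> simp⟩
  invFun q := q.1.1 - 1
  left_inv n := by simp
  right_inv q := Subtype.ext (by
    obtain ⟨h1, h2⟩ := q.2
    exact Prod.ext (by simp; omega) (by simp; omega))

lemma sum_u : (∑' p : uS, F22 ↑p) = ∑' p : cS, F22 ↑p := by
  rw [← Equiv.tsum_eq eUC (fun p : cS => F22 ↑p)]
  exact tsum_congr fun q => by
    simp only [eUC, F22, Equiv.coe_fn_mk]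
    rw [mul_comm]

lemma sum_d : (∑' p : dS, F22 ↑p) = ∑' n : ℕ, ((1 / ((n : ℝ≥0) + 1)^4 : ℝ≥0) : ℝ≥0∞) := by
  rw [← Equiv.tsum_eq eD (fun p : dS => F22 ↑p)]
  exact tsum_congr fun n => by
    simp only [eD, F22, Equiv.coe_fn_mk]
    congr 1
    push_cast
    ring_nf

lemma split : (∑' p : aS, F22 ↑p)
    = (∑' p : cS, F22 ↑p) + (∑' p : cS, F22 ↑p) + (∑' p : dS, F22 ↑p) := by
  have hsplit : ∀ p : ℕ × ℕ,
      aS.indicator F22 p = cS.indicator F22 p + uS.indicator F22 p + dS.indicator F22 p := by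
    intro p
    simp only [Set.indicator_apply, aS, cS, uS, dS, Set.mem_setOf_eq]
    split_ifs <;> first | omega | simp
  rw [tsum_subtype aS F22, tsum_congr hsplit, ENNReal.tsum_add, ENNReal.tsum_add,
    ← tsum_subtype cS F22, ← tsum_subtype uS F22, ← tsum_subtype dS F22, sum_u]

lemma sum_g : (∑' p : cS, G ↑p) = ∑' p : aS, F22 ↑p := by
  rw [← Equiv.tsum_eq eAC (fun p : cS => G ↑p)]
  exact tsum_congr fun q => by
    simp only [eAC, G, F22, Equiv.coe_fn_mk]
    rw [Nat.add_sub_cancel_left]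

lemma sum_gu : (∑' p : cS, GU ↑p) = ∑' p : cS, F22 ↑p := by
  rw [← Equiv.tsum_eq eCC (fun p : cS => GU ↑p)]
  exact tsum_congr fun q => by
    obtain ⟨⟨N, m⟩, h1, h2⟩ := q
    simp only [eCC, GU, F22, Equiv.coe_fn_mk]
    have h : N - (N - m) = m := by omega
    rw [h, mul_comm]

lemma sum_wu : (∑' p : cS, WU ↑p) = ∑' p : cS, W ↑p := by
  rw [← Equiv.tsum_eq eCC (fun p : cS => W ↑p)]
  exact tsum_congr fun q => by
    obtain ⟨⟨N, m⟩, h1, h2⟩ := q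
    simp only [eCC, W, WU, wNN, Equiv.coe_fn_mk]

lemma pointwise (q : cS) :
    G ↑q = F22 ↑q + GU ↑q + W ↑q + W ↑q + WU ↑q + WU ↑q := by
  obtain ⟨⟨N, m⟩, hm, hmN⟩ := q
  simp only [G, F22, GU, W, WU, wNN]
  have hm0 : (m : ℝ≥0) ≠ 0 := Nat.cast_ne_zero.mpr (by omega)
  have hb0 : ((N - m : ℕ) : ℝ≥0) ≠ 0 := Nat.cast_ne_zero.mpr (by omega)
  have hN : ((N : ℕ) : ℝ≥0) = (m : ℝ≥0) + ((N - m : ℕ) : ℝ≥0) := by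
    rw [← Nat.cast_add]; congr 1; omega
  have h := key_id (m : ℝ≥0) ((N - m : ℕ) : ℝ≥0) hm0 hb0
  rw [← hN] at h
  rw [← ENNReal.coe_add, ← ENNReal.coe_add, ← ENNReal.coe_add, ← ENNReal.coe_add,
    ← ENNReal.coe_add, ENNReal.coe_inj]
  exact h

-- finiteness of the full-quadrant sum
def eA : (ℕ × ℕ) ≃ aS where
  toFun p := ⟨(p.1 + 1, p.2 + 1), by constructor <;> simp⟩
  invFun q := (q.1.1 - 1, q.1.2 - 1)
  left_inv p := by simp
  right_inv q := Subtype.ext (by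
    obtain ⟨h1, h2⟩ := q.2
    exact Prod.ext (by simp; omega) (by simp; omega))

lemma sum2_ne_top : (∑' n : ℕ, ((1 / ((n : ℝ≥0) + 1)^2 : ℝ≥0) : ℝ≥0∞)) ≠ ⊤ := by
  rw [ENNReal.tsum_coe_ne_top_iff_summable, ← NNReal.summable_coe]
  have h1 : Summable (fun n : ℕ => 1 / ((n : ℝ)) ^ 2) :=
    Real.summable_one_div_nat_pow.mpr (by norm_num)
  have h2 := (_root_.summable_nat_add_iff 1).mpr h1
  apply h2.congr
  intro n
  push_cast
  norm_num

lemma T_ne_top : (∑' p : aS, F22 ↑p) ≠ ⊤ := by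
  rw [← Equiv.tsum_eq eA (fun p : aS => F22 ↑p)]
  have hfun : ∀ p : ℕ × ℕ, F22 (eA p) =
      ((1 / ((p.1 : ℝ≥0) + 1)^2 : ℝ≥0) : ℝ≥0∞) * ((1 / ((p.2 : ℝ≥0) + 1)^2 : ℝ≥0) : ℝ≥0∞) := by
    intro p
    simp only [eA, F22, Equiv.coe_fn_mk, ← ENNReal.coe_mul, ENNReal.coe_inj]
    push_cast
    rw [div_mul_div_comm, one_mul]
  rw [tsum_congr hfun, ENNReal.tsum_prod
    (f := fun (m n : ℕ) => ((1 / ((m : ℝ≥0) + 1)^2 : ℝ≥0) : ℝ≥0∞) * ((1 / ((n : ℝ≥0) + 1)^2 : ℝ≥0) : ℝ≥0∞))]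
  simp_rw [ENNReal.tsum_mul_left]
  rw [ENNReal.tsum_mul_right]
  exact ENNReal.mul_ne_top sum2_ne_top sum2_ne_top

lemma D_eq_4Z : (∑' p : dS, F22 ↑p)
    = (∑' p : cS, W ↑p) + (∑' p : cS, W ↑p) + (∑' p : cS, W ↑p) + (∑' p : cS, W ↑p) := by
  have hS : (∑' p : cS, F22 ↑p) ≠ ⊤ := by
    intro h
    apply T_ne_top
    rw [split, h]
    simp
  have h1 : (∑' p : cS, G ↑p)
      = (∑' p : cS, F22 ↑p) + (∑' p : cS, F22 ↑p)
        + ((∑' p : cS, W ↑p) + (∑' p : cS, W ↑p) + (∑' p : cS, W ↑p) + (∑' p : cS, W ↑p)) := by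
    rw [tsum_congr pointwise]
    simp only [ENNReal.tsum_add]
    rw [sum_gu, sum_wu]
    ring
  have h2 := sum_g.trans split
  rw [h1] at h2
  have hSS : (∑' p : cS, F22 ↑p) + (∑' p : cS, F22 ↑p) ≠ ⊤ := ENNReal.add_ne_top.mpr ⟨hS, hS⟩
  exact ((ENNReal.add_right_inj hSS).mp h2).symm

end Zeta31Aux

open Zeta31Aux NNReal ENNReal in
/-- `ζ(3,1) = (1/4)·ζ(4)`:
`∑_{n>m≥1} 1/(n³m) = (1/4)·∑_{n≥1} 1/n⁴`. -/
theorem zeta31_eq_quarter_zeta4 :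
    (∑' p : {p : ℕ × ℕ // 0 < p.2 ∧ p.2 < p.1},
        (1 : ℝ) / (((p.1.1 : ℝ) ^ 3) * ((p.1.2 : ℝ) ^ 1))) =
      (1 / 4) * (∑' n : ℕ, (1 : ℝ) / ((n : ℝ) + 1) ^ 4) := by
  classical
  -- the ℝ≥0 zeta-4 function
  set q : ℕ → ℝ≥0 := fun n => 1 / ((n : ℝ≥0) + 1)^4 with hq
  have hq_coe : ∀ n, ((q n : ℝ≥0) : ℝ) = 1 / ((n : ℝ) + 1)^4 := by
    intro n; rw [hq]; push_cast; norm_num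
  have hqsum : Summable q := by
    rw [← NNReal.summable_coe]
    have h1 : Summable (fun n : ℕ => 1 / ((n : ℝ)) ^ 4) :=
      Real.summable_one_div_nat_pow.mpr (by norm_num)
    have h2 := (_root_.summable_nat_add_iff 1).mpr h1
    apply h2.congr
    intro n
    rw [hq_coe]
    push_cast
    norm_num
  -- ENNReal facts
  have hD : (∑' p : dS, F22 ↑p) = ((∑' n, q n : ℝ≥0) : ℝ≥0∞) :=
    sum_d.trans (ENNReal.coe_tsum hqsum).symm
  have h4 := D_eq_4Z
  rw [hD] at h4
  -- h4 : ↑(∑' q) = Z + Z + Z + Z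
  have hZne : (∑' p : cS, W ↑p) ≠ ⊤ := by
    intro htop
    rw [htop] at h4
    simp at h4
  have hwsum : Summable (fun p : cS => wNN ↑p) := by
    rw [← ENNReal.tsum_coe_ne_top_iff_summable]
    exact hZne
  have hZ : (∑' p : cS, W ↑p) = ((∑' p : cS, wNN ↑p : ℝ≥0) : ℝ≥0∞) :=
    (ENNReal.coe_tsum hwsum).symm
  rw [hZ, ← ENNReal.coe_add, ← ENNReal.coe_add, ← ENNReal.coe_add, ENNReal.coe_inj] at h4
  -- h4 : ∑' q = ∑'w + ∑'w + ∑'w + ∑'w  in ℝ≥0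
  have h4R : (∑' n, q n : ℝ≥0) = ((∑' p : cS, wNN ↑p) + (∑' p : cS, wNN ↑p)
      + (∑' p : cS, wNN ↑p) + (∑' p : cS, wNN ↑p) : ℝ≥0) := h4
  have h4real := congrArg (fun x : ℝ≥0 => (x : ℝ)) h4R
  simp only [NNReal.coe_add] at h4real
  -- translate goal
  have hLHS : (∑' p : {p : ℕ × ℕ // 0 < p.2 ∧ p.2 < p.1},
        (1 : ℝ) / (((p.1.1 : ℝ) ^ 3) * ((p.1.2 : ℝ) ^ 1)))
      = ((∑' p : cS, wNN ↑p : ℝ≥0) : ℝ) := by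
    rw [NNReal.coe_tsum]
    exact tsum_congr fun p => by
      simp only [wNN]
      push_cast
      norm_num
  have hRHS : (∑' n : ℕ, (1 : ℝ) / ((n : ℝ) + 1) ^ 4) = ((∑' n, q n : ℝ≥0) : ℝ) := by
    rw [NNReal.coe_tsum]
    exact tsum_congr fun n => (hq_coe n).symm
  rw [hLHS, hRHS]
  linarith [h4real]
end

section
/- Let k ≥ 2 be an integer and let t be a real number with |t| < 1. Then exp(∑_{i≥1} (−1)^{i−1}·ζ(ik)·tⁱ/i) = 1 + ∑_{i≥1} ζ(k, k, …, k)·tⁱ, where in the i-th term on the right the multiple zeta value has i repeated arguments all equal to k; both series converge absolutely. -/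
open Finset Real

def finsetCardEquivStrictMono {α : Type*} [LinearOrder α] (j : ℕ) :
    {A : Finset α // A.card = j} ≃ {f : Fin j → α // StrictMono f} where
  toFun A := ⟨A.1.orderEmbOfFin A.2, (A.1.orderEmbOfFin A.2).strictMono⟩
  invFun f := ⟨univ.image f.1, by
    rw [card_image_of_injective _ f.2.injective, card_univ, Fintype.card_fin]⟩
  left_inv A := Subtype.ext (image_orderEmbOfFin_univ A.1 A.2)
  right_inv f := Subtype.ext
    (orderEmbOfFin_unique _ (fun i => mem_image_of_mem _ (mem_univ i)) f.2).symm

def strictMonoEquivStrictAntiPos (j : ℕ) :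
    {f : Fin j → ℕ // StrictMono f} ≃ {v : Fin j → ℕ // StrictAnti v ∧ ∀ i, 0 < v i} where
  toFun f := ⟨fun i => f.1 i.rev + 1,
    fun _ _ hab => Nat.succ_lt_succ (f.2 (Fin.rev_lt_rev.2 hab)), fun _ => Nat.succ_pos _⟩
  invFun v := ⟨fun i => v.1 i.rev - 1, fun a b hab => by
    show v.1 a.rev - 1 < v.1 b.rev - 1
    have := v.2.1 (Fin.rev_lt_rev.2 hab)
    have := v.2.2 a.rev
    omega⟩
  left_inv f := by ext i; simp
  right_inv v := by
    ext i
    have := v.2.2 i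
    simp only [Fin.rev_rev]
    omega

lemma multipleZeta_eq_tsum_strictMono {j : ℕ} (s : Fin j → ℕ) :
    multipleZeta s =
      ∑' f : {f : Fin j → ℕ // StrictMono f}, ∏ i, 1 / ((f.1 i.rev : ℝ) + 1) ^ s i := by
  rw [multipleZeta, ← (strictMonoEquivStrictAntiPos j).tsum_eq]
  simp [strictMonoEquivStrictAntiPos]

lemma multipleZeta_fin_zero (s : Fin 0 → ℕ) : multipleZeta s = 1 := by
  simp only [multipleZeta, univ_eq_empty, prod_empty, tsum_const, Nat.card_eq_fintype_card]
  rw [Fintype.card_eq_one_iff.2 ⟨⟨finZeroElim, Subsingleton.strictAnti _, finZeroElim⟩,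
    fun v => Subtype.ext (funext finZeroElim)⟩]
  simp

lemma multipleZeta_fin_one (m : ℕ) :
    multipleZeta (fun _ : Fin 1 => m) = ∑' n : ℕ, 1 / ((n : ℝ) + 1) ^ m := by
  rw [multipleZeta_eq_tsum_strictMono, ← ((Equiv.subtypeUnivEquiv Subsingleton.strictMono).trans
    (Equiv.funUnique (Fin 1) ℕ)).symm.tsum_eq]
  simp

lemma multipleZeta_const_eq_tsum_finset (k j : ℕ) :
    multipleZeta (fun _ : Fin j => k) =
      ∑' A : {A : Finset ℕ // A.card = j}, ∏ n ∈ A.1, 1 / ((n : ℝ) + 1) ^ k := by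
  rw [multipleZeta_eq_tsum_strictMono, ← (finsetCardEquivStrictMono j).symm.tsum_eq]
  refine tsum_congr fun f => ?_
  rw [← Equiv.prod_comp Fin.revPerm]
  simp [finsetCardEquivStrictMono, prod_image f.2.injective.injOn]

lemma hasSum_log_one_add_of_abs_lt_one {z : ℝ} (hz : |z| < 1) :
    HasSum (fun i : ℕ => (-1) ^ i * z ^ (i + 1) / (i + 1)) (log (1 + z)) := by
  have h := (hasSum_pow_div_log_of_abs_lt_one (x := -z) (by rwa [abs_neg])).neg
  rw [neg_neg, sub_neg_eq_add] at h
  refine h.congr_fun fun i => ?_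
  rw [neg_pow, pow_succ]
  ring

section

variable {ι : Type*} {y : ι → ℝ}

lemma summable_uncurry_log_series {r : ℝ} (hy : Summable y) (hr0 : 0 ≤ r) (hr : r < 1)
    (hyr : ∀ n, |y n| ≤ r) :
    Summable (Function.uncurry fun (i : ℕ) (n : ι) => (-1) ^ i * y n ^ (i + 1) / (i + 1)) := by
  refine Summable.of_norm_bounded ((summable_geometric_of_lt_one hr0 hr).mul_of_nonneg hy.abs
    (fun i => pow_nonneg hr0 i) (fun n => abs_nonneg (y n))) fun ⟨i, n⟩ => ?_
  have hi : (1 : ℝ) ≤ i + 1 := by linarith [i.cast_nonneg (α := ℝ)]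
  calc ‖(-1) ^ i * y n ^ (i + 1) / (i + 1)‖ = |y n| ^ i * |y n| / (i + 1) := by
        rw [norm_div, norm_mul, norm_pow, norm_pow, norm_neg, norm_one, one_pow, one_mul,
          Real.norm_eq_abs, Real.norm_eq_abs, abs_of_pos (by positivity : (0 : ℝ) < i + 1),
          pow_succ]
    _ ≤ |y n| ^ i * |y n| := div_le_self (by positivity) hi
    _ ≤ r ^ i * |y n| := by gcongr; exact hyr n

lemma hasSum_tsum_log_one_add {r : ℝ} (hy : Summable y) (hr0 : 0 ≤ r) (hr : r < 1)
    (hyr : ∀ n, |y n| ≤ r) :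
    HasSum (fun i : ℕ => (-1) ^ i * (∑' n, y n ^ (i + 1)) / (i + 1)) (∑' n, log (1 + y n)) := by
  have hsum := summable_uncurry_log_series hy hr0 hr hyr
  have hlog n : ∑' i : ℕ, (-1) ^ i * y n ^ (i + 1) / (i + 1) = log (1 + y n) :=
    (hasSum_log_one_add_of_abs_lt_one ((hyr n).trans_lt hr)).tsum_eq
  have hrow (i : ℕ) : (-1) ^ i * (∑' n, y n ^ (i + 1)) / (i + 1) =
      ∑' n, (-1) ^ i * y n ^ (i + 1) / (i + 1) := by
    rw [tsum_div_const, tsum_mul_left]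
  simp_rw [hrow, ← hlog]
  rw [hsum.tsum_comm]
  exact hsum.prod.hasSum

lemma exp_tsum_log_one_add_eq_tsum_prod (hy : Summable y) (hpos : ∀ n, 0 < 1 + y n) :
    exp (∑' n, log (1 + y n)) = ∑' A : Finset ι, ∏ n ∈ A, y n := by
  rw [rexp_tsum_eq_tprod hpos (summable_log_one_add_of_summable hy),
    tprod_one_add (summable_finsetProd_of_summable_norm hy.norm)]

end

lemma hasSum_tsum_card_fiber {ι : Type*} {f : Finset ι → ℝ} (hf : Summable f) :
    HasSum (fun j => ∑' A : {A : Finset ι // A.card = j}, f A) (∑' A, f A) :=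
  hf.hasSum.tsum_fiberwise card

lemma summable_one_div_nat_add_one_pow {k : ℕ} (hk : 2 ≤ k) :
    Summable (fun n : ℕ => 1 / ((n : ℝ) + 1) ^ k) := by
  have := (summable_nat_add_iff 1).mpr (Real.summable_one_div_nat_pow.mpr hk)
  exact_mod_cast this

/-- For an integer `k ≥ 2` and `|t| < 1`,
`exp(∑_{i≥1} (−1)^{i−1} ζ(ik) tⁱ/i) = 1 + ∑_{i≥1} ζ(k,…,k) tⁱ`
(with `i` repeated arguments `k` in the `i`-th term), both series converging
absolutely. -/
theorem exp_zeta_series_eq_repeated_mzv_series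
    (k : ℕ) (hk : 2 ≤ k) (t : ℝ) (ht : |t| < 1) :
    Summable (fun i : ℕ =>
      (-1 : ℝ) ^ i * multipleZeta (fun _ : Fin 1 => (i + 1) * k) * t ^ (i + 1) / ((i : ℝ) + 1)) ∧
    Summable (fun i : ℕ => multipleZeta (fun _ : Fin (i + 1) => k) * t ^ (i + 1)) ∧
    Real.exp (∑' i : ℕ,
        (-1 : ℝ) ^ i * multipleZeta (fun _ : Fin 1 => (i + 1) * k) * t ^ (i + 1) / ((i : ℝ) + 1)) =
      1 + ∑' i : ℕ, multipleZeta (fun _ : Fin (i + 1) => k) * t ^ (i + 1) := by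
  set x : ℕ → ℝ := fun n => 1 / ((n : ℝ) + 1) ^ k
  have hx : Summable x := summable_one_div_nat_add_one_pow hk
  have hxt n : |t * x n| ≤ |t| := by
    have hn : (1 : ℝ) ≤ n + 1 := by linarith [n.cast_nonneg (α := ℝ)]
    rw [abs_mul, abs_of_nonneg (by positivity : 0 ≤ x n)]
    exact mul_le_of_le_one_right (abs_nonneg t) (div_le_one_of_le₀ (one_le_pow₀ hn) (by positivity))
  have hlog := hasSum_tsum_log_one_add (hx.mul_left t) (abs_nonneg t) ht hxt
  have hzeta (i : ℕ) : (-1) ^ i * (∑' n, (t * x n) ^ (i + 1)) / (i + 1) =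
      (-1 : ℝ) ^ i * multipleZeta (fun _ : Fin 1 => (i + 1) * k) * t ^ (i + 1) / ((i : ℝ) + 1) := by
    simp_rw [multipleZeta_fin_one, mul_pow, tsum_mul_left, x, one_div_pow, ← pow_mul, mul_comm k]
    ring
  have hmzv (j : ℕ) : ∑' A : {A : Finset ℕ // A.card = j}, ∏ n ∈ A.1, t * x n =
      multipleZeta (fun _ : Fin j => k) * t ^ j := by
    rw [multipleZeta_const_eq_tsum_finset, mul_comm, ← tsum_mul_left]
    refine tsum_congr fun A => ?_
    rw [prod_mul_distrib, prod_const, A.2]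
  have hexp := hasSum_tsum_card_fiber (summable_finsetProd_of_summable_norm (hx.mul_left t).norm)
  simp_rw [hzeta] at hlog
  simp_rw [hmzv] at hexp
  refine ⟨hlog.summable, (summable_nat_add_iff 1).mpr hexp.summable, ?_⟩
  rw [hlog.tsum_eq, exp_tsum_log_one_add_eq_tsum_prod (hx.mul_left t) fun n => ?_, ← hexp.tsum_eq,
    hexp.summable.tsum_eq_zero_add, multipleZeta_fin_zero, pow_zero, mul_one]
  linarith [neg_abs_le (t * x n), hxt n]
end

section
/- Let 0 < q < 1 be real, let k ≥ 1 be an integer, set [k]_q = (1−q^k)/(1−q), and for an integer s ≥ 1 define 𝔮_s(k) = q^{k(s−1)}/[k]_q^s. Then for all integers s, t ≥ 1, 𝔮_s(k)·𝔮_t(k) = 𝔮_{s+t}(k) + (1−q)·𝔮_{s+t−1}(k). -/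
/-- For `0 < q < 1`, `k ≥ 1`, `[k]_q = (1−q^k)/(1−q)` and
`𝔮_s(k) = q^{k(s−1)}/[k]_q^s`, one has
`𝔮_s(k)·𝔮_t(k) = 𝔮_{s+t}(k) + (1−q)·𝔮_{s+t−1}(k)` for all integers `s, t ≥ 1`. -/
theorem q_mzv_basis_mul (q : ℝ) (hq0 : 0 < q) (hq1 : q < 1)
    (k : ℕ) (hk : 1 ≤ k) (s t : ℕ) (hs : 1 ≤ s) (ht : 1 ≤ t) :
    (q ^ (k * (s - 1)) / ((1 - q ^ k) / (1 - q)) ^ s) *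
      (q ^ (k * (t - 1)) / ((1 - q ^ k) / (1 - q)) ^ t) =
      q ^ (k * (s + t - 1)) / ((1 - q ^ k) / (1 - q)) ^ (s + t) +
        (1 - q) * (q ^ (k * (s + t - 1 - 1)) / ((1 - q ^ k) / (1 - q)) ^ (s + t - 1)) := by
  obtain ⟨a, rfl⟩ := Nat.exists_eq_add_of_le hs
  obtain ⟨b, rfl⟩ := Nat.exists_eq_add_of_le ht
  have hqk : q ^ k < 1 := pow_lt_one₀ hq0.le hq1 (by omega)
  have h1 : (1:ℝ) - q ≠ 0 := by linarith
  have h2 : (1:ℝ) - q ^ k ≠ 0 := by linarith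
  set Q := (1 - q ^ k) / (1 - q) with hQdef
  have hQ : Q ≠ 0 := div_ne_zero h2 h1
  have hkey : (1 - q) * Q = 1 - q ^ k := mul_div_cancel₀ _ h1
  have e1 : 1 + a - 1 = a := by omega
  have e2 : 1 + b - 1 = b := by omega
  have e3 : 1 + a + (1 + b) - 1 = a + b + 1 := by omega
  have e4 : a + b + 1 - 1 = a + b := by omega
  have e5 : 1 + a + (1 + b) = a + b + 2 := by omega
  rw [e1, e2, e3, e4, e5]
  have hx : q ^ (k * (a + b + 1)) = q ^ (k * (a + b)) * q ^ k := by
    rw [← pow_add]; ring_nf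
  rw [hx]
  rw [div_mul_div_comm, ← pow_add, ← pow_add]
  have h6 : k * a + k * b = k * (a + b) := by ring
  rw [h6]
  have h7 : (1 - q) * (q ^ (k * (a + b)) / Q ^ (a + b + 1)) =
      q ^ (k * (a + b)) * ((1 - q) * Q) / Q ^ (a + b + 2) := by
    rw [show a + b + 2 = (a + b + 1) + 1 from rfl, pow_succ]
    field_simp
    ring
  rw [h7, hkey, e5, ← add_div]
  congr 1
  ring
end
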